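/- arXiv:2305.08846 — 6 statements merged into one kernel-verified Lean document; each statement's English description precedes it below -/
import Mathlib

section
/- If X1 is stochastically dominated by Y1, and for every real x the conditional distribution of X2 given X1=x is stochastically dominated by Y2, and Y1 and Y2 are independent, then X1+X2 is stochastically dominated by Y1+Y2. -/
open MeasureTheory ProbabilityTheory Set

/-- Domination on open tails implies domination on closed tails. -/
lemma dom_Ici {μ ν : Measure ℝ} [IsProbabilityMeasure μ] [IsProbabilityMeasure ν]
    (h : ∀ t : ℝ, μ (Ioi t) ≤ ν (Ioi t)) (c : ℝ) : μ (Ici c) ≤ ν (Ici c) := by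
  have hInter : (⋂ n : ℕ, Ioi (c - 1 / (n + 1))) = Ici c := by
    ext x
    simp only [mem_iInter, mem_Ioi, mem_Ici]
    constructor
    · intro hx
      by_contra hlt
      push_neg at hlt
      obtain ⟨n, hn⟩ := exists_nat_one_div_lt (sub_pos.mpr hlt)
      have := hx n
      linarith
    · intro hx n
      have : (0:ℝ) < 1 / (n + 1) := by positivity
      linarith
  have hanti : Antitone (fun n : ℕ => Ioi (c - 1 / (n + 1))) := by
    intro m n hmn
    apply Ioi_subset_Ioi
    have h1 : (1:ℝ) / (n + 1) ≤ 1 / (m + 1) := by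
      apply one_div_le_one_div_of_le <;> [positivity; exact_mod_cast by linarith]
    linarith
  have hμ : μ (Ici c) = ⨅ n : ℕ, μ (Ioi (c - 1 / (n + 1))) := by
    rw [← hInter]
    exact hanti.measure_iInter (fun n => measurableSet_Ioi.nullMeasurableSet)
      ⟨0, measure_ne_top _ _⟩
  have hν : ν (Ici c) = ⨅ n : ℕ, ν (Ioi (c - 1 / (n + 1))) := by
    rw [← hInter]
    exact hanti.measure_iInter (fun n => measurableSet_Ioi.nullMeasurableSet)
      ⟨0, measure_ne_top _ _⟩
  rw [hμ, hν]
  exact iInf_mono fun n => h _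

/-- Domination on tails implies domination on upper sets. -/
lemma dom_upper {μ ν : Measure ℝ} [IsProbabilityMeasure μ] [IsProbabilityMeasure ν]
    (h : ∀ t : ℝ, μ (Ioi t) ≤ ν (Ioi t)) (U : Set ℝ)
    (hU : ∀ ⦃x y : ℝ⦄, x ∈ U → x ≤ y → y ∈ U) : μ U ≤ ν U := by
  rcases U.eq_empty_or_nonempty with rfl | hne
  · simp
  by_cases hbb : BddBelow U
  · set c := sInf U with hc
    have hIci : U ⊆ Ici c := fun x hx => csInf_le hbb hx
    have hIoi : Ioi c ⊆ U := by
      intro x hx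
      obtain ⟨u, hu, hux⟩ := exists_lt_of_csInf_lt hne hx
      exact hU hu hux.le
    by_cases hcU : c ∈ U
    · have : U = Ici c := Subset.antisymm hIci (fun x hx => hU hcU hx)
      rw [this]
      exact dom_Ici h c
    · have : U = Ioi c := by
        apply Subset.antisymm
        · intro x hx
          exact lt_of_le_of_ne (csInf_le hbb hx) (by rintro rfl; exact hcU hx)
        · exact hIoi
      rw [this]
      exact h c
  · have : U = univ := by
      ext x
      simp only [mem_univ, iff_true]
      rw [not_bddBelow_iff] at hbb
      obtain ⟨u, hu, hux⟩ := hbb x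
      exact hU hu hux.le
    rw [this]
    simp

/-- Lebesgue integrals of bounded monotone functions respect stochastic dominance. -/
lemma lintegral_mono_of_dom {μ ν : Measure ℝ} [IsProbabilityMeasure μ] [IsProbabilityMeasure ν]
    (h : ∀ t : ℝ, μ (Ioi t) ≤ ν (Ioi t)) (g : ℝ → ENNReal) (hg : Monotone g)
    (hg1 : ∀ x, g x ≤ 1) : ∫⁻ x, g x ∂μ ≤ ∫⁻ x, g x ∂ν := by
  set f : ℝ → ℝ := fun x => (g x).toReal with hf
  have hfin : ∀ x, g x ≠ ⊤ := fun x => ne_top_of_le_ne_top ENNReal.one_ne_top (hg1 x)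
  have hfmono : Monotone f := fun x y hxy => ENNReal.toReal_mono (hfin y) (hg hxy)
  have hfmble : Measurable f := hfmono.measurable
  have hfnn : ∀ x, 0 ≤ f x := fun x => ENNReal.toReal_nonneg
  have hrepr : ∀ (ρ : Measure ℝ), ∫⁻ x, g x ∂ρ = ∫⁻ x, ENNReal.ofReal (f x) ∂ρ := by
    intro ρ
    apply lintegral_congr
    intro x
    rw [hf, ENNReal.ofReal_toReal (hfin x)]
  rw [hrepr μ, hrepr ν,
    lintegral_eq_lintegral_meas_lt μ (Filter.Eventually.of_forall hfnn) hfmble.aemeasurable,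
    lintegral_eq_lintegral_meas_lt ν (Filter.Eventually.of_forall hfnn) hfmble.aemeasurable]
  apply lintegral_mono
  intro t
  exact dom_upper h {a : ℝ | t < f a} (fun x y hx hxy => lt_of_lt_of_le hx (hfmono hxy))

/-- **Stochastic dominance is preserved under sums.**
If `X1` is stochastically dominated by `Y1` (with distribution `ν1`), and for (almost) every `x`
the conditional distribution of `X2` given `X1 = x` (formalized via the conditional kernel of the
joint law of `(X1, X2)`) is stochastically dominated by `Y2` (with distribution `ν2`), and
`Y1, Y2` are independent (so the law of `(Y1, Y2)` is the product `ν1.prod ν2`), then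
`X1 + X2` is stochastically dominated by `Y1 + Y2`. -/
theorem stochastic_dominance_sum {Ω : Type*} [MeasurableSpace Ω]
    (μ : Measure Ω) [IsProbabilityMeasure μ]
    (X1 X2 : Ω → ℝ) (hX1 : Measurable X1) (hX2 : Measurable X2)
    (ν1 ν2 : Measure ℝ) [IsProbabilityMeasure ν1] [IsProbabilityMeasure ν2]
    (hdom1 : ∀ t : ℝ, μ {ω | t < X1 ω} ≤ ν1 {y | t < y})
    (hdom2 : ∀ᵐ x ∂(μ.map X1), ∀ t : ℝ,
      ((μ.map (fun ω => (X1 ω, X2 ω))).condKernel x) {y | t < y} ≤ ν2 {y | t < y}) :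
    ∀ t : ℝ, μ {ω | t < X1 ω + X2 ω} ≤ (ν1.prod ν2) {p : ℝ × ℝ | t < p.1 + p.2} := by
  intro t
  set ρ : Measure (ℝ × ℝ) := μ.map (fun ω => (X1 ω, X2 ω)) with hρ
  have hXp : Measurable (fun ω => (X1 ω, X2 ω)) := hX1.prodMk hX2
  have : IsProbabilityMeasure ρ := Measure.isProbabilityMeasure_map hXp.aemeasurable
  have hfst : ρ.fst = μ.map X1 := Measure.fst_map_prodMk hX2
  have hS : MeasurableSet {p : ℝ × ℝ | t < p.1 + p.2} :=
    measurableSet_lt measurable_const (measurable_fst.add measurable_snd)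
  -- rewrite the LHS via the joint law and disintegration
  have h1 : μ {ω | t < X1 ω + X2 ω} = ρ {p : ℝ × ℝ | t < p.1 + p.2} := by
    rw [hρ, Measure.map_apply hXp hS]
    rfl
  have h2 : ρ {p : ℝ × ℝ | t < p.1 + p.2}
      = ∫⁻ x, ρ.condKernel x {y | t - x < y} ∂(μ.map X1) := by
    conv_lhs => rw [← ρ.disintegrate ρ.condKernel]
    rw [Measure.compProd_apply hS, hfst]
    apply lintegral_congr
    intro x
    congr 1
    ext y
    simp only [mem_preimage, mem_setOf_eq]
    constructor <;> intro <;> linarith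
  -- bound the conditional kernel by ν2
  have h3 : ∫⁻ x, ρ.condKernel x {y | t - x < y} ∂(μ.map X1)
      ≤ ∫⁻ x, ν2 {y | t - x < y} ∂(μ.map X1) := by
    apply lintegral_mono_ae
    filter_upwards [hdom2] with x hx
    exact hx (t - x)
  -- compare integrals of the monotone function `x ↦ ν2 {y | t - x < y}`
  have hdom1' : ∀ s : ℝ, (μ.map X1) (Ioi s) ≤ ν1 (Ioi s) := by
    intro s
    rw [Measure.map_apply hX1 measurableSet_Ioi]
    exact hdom1 s
  have h4 : ∫⁻ x, ν2 {y | t - x < y} ∂(μ.map X1) ≤ ∫⁻ x, ν2 {y | t - x < y} ∂ν1 := by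
    have : IsProbabilityMeasure (μ.map X1) := Measure.isProbabilityMeasure_map hX1.aemeasurable
    apply lintegral_mono_of_dom hdom1' (fun x => ν2 {y | t - x < y})
    · intro x y hxy
      apply measure_mono
      intro z hz
      simp only [mem_setOf_eq] at hz ⊢
      linarith
    · intro x
      exact prob_le_one
  -- identify the RHS
  have h5 : ∫⁻ x, ν2 {y | t - x < y} ∂ν1 = (ν1.prod ν2) {p : ℝ × ℝ | t < p.1 + p.2} := by
    rw [Measure.prod_apply hS]
    apply lintegral_congr
    intro x
    congr 1
    ext y
    simp only [mem_preimage, mem_setOf_eq]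
    constructor <;> intro <;> linarith
  calc μ {ω | t < X1 ω + X2 ω} = ρ {p : ℝ × ℝ | t < p.1 + p.2} := h1
    _ = ∫⁻ x, ρ.condKernel x {y | t - x < y} ∂(μ.map X1) := h2
    _ ≤ ∫⁻ x, ν2 {y | t - x < y} ∂(μ.map X1) := h3
    _ ≤ ∫⁻ x, ν2 {y | t - x < y} ∂ν1 := h4
    _ = (ν1.prod ν2) {p : ℝ × ℝ | t < p.1 + p.2} := h5
end

section
/- Let M : {-1,+1}^m → ℝ^m satisfy (ε,0)-differential privacy with respect to flipping any single input coordinate. Let S be uniform on {-1,+1}^m and T = M(S). Then for every v ∈ ℝ and every t in the support of T, the conditional probability P[∑_{i=1}^m max{0, T_i·S_i} ≥ v | T = t] is at most P[∑_{i=1}^m Š_i·|t_i| ≥ v], where Š ∈ {0,1}^m has independent Bernoulli(e^ε/(e^ε+1)) coordinates. -/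
open MeasureTheory ProbabilityTheory Real

/-- The ±1 sign associated to a boolean. -/
def sgn (b : Bool) : ℝ := if b then 1 else -1

/-- Two sign vectors are adjacent if they differ in at most one coordinate. -/
def Adjacent {m : ℕ} (s s' : Fin m → Bool) : Prop := ∃ j, ∀ i, i ≠ j → s i = s' i

/-- `(ε,0)`-differential privacy with respect to flipping one input coordinate. -/
def PureDP {m : ℕ} (M : (Fin m → Bool) → Measure (Fin m → ℝ)) (ε : ℝ) : Prop :=
  ∀ s s', Adjacent s s' → ∀ A : Set (Fin m → ℝ), MeasurableSet A →
    M s A ≤ ENNReal.ofReal (exp ε) * M s' A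

/-- Probability that independent Bernoulli coordinates come out as the pattern `sh`,
where each coordinate is `true` with probability `q`. -/
def bernVecPr {m : ℕ} (q : ℝ) (sh : Fin m → Bool) : ℝ :=
  ∏ i, if sh i then q else 1 - q

/-!
For almost every `t`, the conditional law `κ` of `S` given `T = t` inherits the privacy bound on
points, `κ {s} ≤ e^ε κ {s'}` for adjacent `s, s'`, because `ρ (A ×ˢ {s}) = 2⁻ᵐ M s A`.
After flipping the coordinates where `tᵢ < 0`, the event becomes the upper set
`{sh | v ≤ ∑_{shᵢ} |tᵢ|}` of the Boolean cube. A law on the cube whose mass grows by at most a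
factor `a` when one coordinate is switched on gives every upper set at most the mass of the product
of `Bernoulli(a / (a + 1))` laws: by induction on the dimension, conditioning on the first
coordinate, since the mass of `{sh₀ = true}` is at most `a / (a + 1)` of the total and the upper
set's section over `true` contains its section over `false`.
-/

open MeasureTheory Finset Set
open scoped ENNReal

section BooleanCube

variable {n : ℕ}

lemma bernVecPr_nonneg {q : ℝ} (hq₀ : 0 ≤ q) (hq₁ : q ≤ 1) (sh : Fin n → Bool) :
    0 ≤ bernVecPr q sh :=
  prod_nonneg fun i _ => by cases sh i <;> simp [hq₀, hq₁]

lemma bernVecPr_cons (q : ℝ) (b : Bool) (sh : Fin n → Bool) :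
    bernVecPr q (Fin.cons b sh) = (if b then q else 1 - q) * bernVecPr q sh := by
  simp [bernVecPr, Fin.prod_univ_succ]

lemma sum_pi_fin_succ_bool {M : Type*} [AddCommMonoid M] (f : (Fin (n + 1) → Bool) → M) :
    ∑ sh, f sh = ∑ sh : Fin n → Bool, f (Fin.cons true sh) +
      ∑ sh : Fin n → Bool, f (Fin.cons false sh) := by
  rw [← (Fin.consEquiv fun _ => Bool).sum_comp, Fintype.sum_prod_type, Fintype.sum_bool]
  rfl

lemma Set.indicator_fin_cons_apply {M : Type*} [Zero M] (E : Set (Fin (n + 1) → Bool))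
    (f : (Fin (n + 1) → Bool) → M) (b : Bool) (sh : Fin n → Bool) :
    E.indicator f (Fin.cons b sh) =
      {x | Fin.cons b x ∈ E}.indicator (fun x => f (Fin.cons b x)) sh := by
  simp [Set.indicator]

lemma IsUpperSet.setOf_fin_cons_mem {E : Set (Fin (n + 1) → Bool)} (hE : IsUpperSet E)
    (b : Bool) : IsUpperSet {sh : Fin n → Bool | Fin.cons b sh ∈ E} :=
  fun _ _ h => hE (Fin.cons_le_cons.2 ⟨le_rfl, h⟩)

lemma IsUpperSet.fin_cons_true_mem {E : Set (Fin (n + 1) → Bool)} (hE : IsUpperSet E)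
    {sh : Fin n → Bool} (h : Fin.cons false sh ∈ E) : Fin.cons true sh ∈ E :=
  hE (Fin.cons_le_cons.2 ⟨Bool.false_le _, le_rfl⟩) h

lemma sum_indicator_le_sum_mul_bernVecPr {a : ℝ} (ha : 0 ≤ a) (p : (Fin n → Bool) → ℝ)
    (hp : 0 ≤ p)
    (hflip : ∀ sh j, p (Function.update sh j true) ≤ a * p (Function.update sh j false))
    {E : Set (Fin n → Bool)} (hE : IsUpperSet E) :
    ∑ sh, E.indicator p sh ≤ (∑ sh, p sh) * ∑ sh, E.indicator (bernVecPr (a / (a + 1))) sh := by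
  set q := a / (a + 1)
  have hq₀ : 0 ≤ q := by positivity
  have hq₁ : q ≤ 1 := div_le_one_of_le₀ (by linarith) (by linarith)
  induction n with
  | zero =>
    rcases E.eq_empty_or_nonempty with rfl | ⟨x, hx⟩
    · simp
    · have : E = univ := eq_univ_of_forall fun y => Subsingleton.elim x y ▸ hx
      simp [this, bernVecPr]
  | succ n ih =>
    have ih_section (b : Bool) := ih (fun sh => p (Fin.cons b sh)) (fun _ => hp _)
      (fun sh j => by simpa only [Fin.cons_update] using hflip (Fin.cons b sh) j.succ)
      (hE.setOf_fin_cons_mem b)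
    set c₁ := ∑ sh, p (Fin.cons true sh)
    set c₀ := ∑ sh, p (Fin.cons false sh)
    set B₁ := ∑ sh, {x | Fin.cons true x ∈ E}.indicator (bernVecPr q) sh
    set B₀ := ∑ sh, {x | Fin.cons false x ∈ E}.indicator (bernVecPr q) sh
    have hc₁ : c₁ ≤ q * (c₁ + c₀) := by
      have : c₁ ≤ a * c₀ := by
        rw [mul_sum]
        exact sum_le_sum fun sh _ => by simpa using hflip (Fin.cons true sh) 0
      rw [div_mul_eq_mul_div, le_div_iff₀ (by linarith)]
      nlinarith
    have hB : B₀ ≤ B₁ := sum_le_sum fun sh _ =>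
      indicator_le_indicator_of_subset (fun _ => hE.fin_cons_true_mem)
        (fun _ => bernVecPr_nonneg hq₀ hq₁ _) _
    have hbern : ∑ sh, E.indicator (bernVecPr q) sh = q * B₁ + (1 - q) * B₀ := by
      simp only [sum_pi_fin_succ_bool, indicator_fin_cons_apply, bernVecPr_cons,
        indicator_const_mul, ← mul_sum, if_true, Bool.false_eq_true, if_false]
      rfl
    rw [sum_pi_fin_succ_bool, sum_pi_fin_succ_bool, hbern]
    simp only [indicator_fin_cons_apply]
    have hmix : (c₁ + c₀) * (q * B₁ + (1 - q) * B₀) - (c₁ * B₁ + c₀ * B₀) =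
        (q * (c₁ + c₀) - c₁) * (B₁ - B₀) := by ring
    calc _ ≤ c₁ * B₁ + c₀ * B₀ := add_le_add (ih_section true) (ih_section false)
      _ ≤ (c₁ + c₀) * (q * B₁ + (1 - q) * B₀) := by
        linarith [mul_nonneg (sub_nonneg.2 hc₁) (sub_nonneg.2 hB)]

lemma measure_le_bernVecPr_of_isUpperSet {a : ℝ} (ha : 0 ≤ a) (κ : Measure (Fin n → Bool))
    [IsProbabilityMeasure κ]
    (hflip : ∀ sh j,
      κ {Function.update sh j true} ≤ ENNReal.ofReal a * κ {Function.update sh j false})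
    {E : Set (Fin n → Bool)} (hE : IsUpperSet E) :
    κ E ≤ ENNReal.ofReal (∑ sh, E.indicator (bernVecPr (a / (a + 1))) sh) := by
  set p : (Fin n → Bool) → ℝ := fun s => (κ {s}).toReal
  have hκ (F : Set (Fin n → Bool)) : κ F = ENNReal.ofReal (∑ sh, F.indicator p sh) := by
    rw [ENNReal.ofReal_sum_of_nonneg fun _ _ => indicator_nonneg (fun _ _ => ENNReal.toReal_nonneg) _,
      ← lintegral_indicator_one (s := F) .of_discrete, lintegral_fintype]
    refine sum_congr rfl fun s _ => ?_
    by_cases hs : s ∈ F <;> simp [hs]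
  have hp (sh : Fin n → Bool) (j : Fin n) :
      p (Function.update sh j true) ≤ a * p (Function.update sh j false) := by
    have := ENNReal.toReal_mono (by finiteness) (hflip sh j)
    rwa [ENNReal.toReal_mul, ENNReal.toReal_ofReal ha] at this
  have htotal : ∑ sh, p sh = 1 := by simpa using (hκ univ).symm
  rw [hκ E]
  refine ENNReal.ofReal_le_ofReal ?_
  simpa [htotal] using sum_indicator_le_sum_mul_bernVecPr ha p (fun _ => ENNReal.toReal_nonneg) hp hE

end BooleanCube

lemma PMF.toMeasure_bind_map_prodMk_apply {α β : Type*} [MeasurableSpace α] [MeasurableSpace β]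
    [Countable β] [DiscreteMeasurableSpace β] (μ : PMF β) (M : β → Measure α)
    {A : Set α} (hA : MeasurableSet A) (s : β) :
    (μ.toMeasure.bind fun s => (M s).map (·, s)) (A ×ˢ {s}) = μ s * M s A := by
  classical
  rw [Measure.bind_apply (hA.prod (measurableSet_singleton s)) Measurable.of_discrete.aemeasurable]
  have (s₀ : β) : (M s₀).map (·, s₀) (A ×ˢ {s}) = ({s} : Set β).indicator (M · A) s₀ := by
    rw [Measure.map_apply measurable_prodMk_right (hA.prod (measurableSet_singleton s)),
      mk_preimage_prod_left_eq_if]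
    by_cases h : s₀ = s <;> simp [h]
  simp only [this]
  rw [lintegral_indicator (measurableSet_singleton s), lintegral_singleton,
    PMF.toMeasure_apply_singleton _ _ (measurableSet_singleton s), mul_comm]

lemma ae_condKernel_le_of_prod_le {α Ω : Type*} [MeasurableSpace α] [MeasurableSpace Ω]
    [StandardBorelSpace Ω] [Nonempty Ω] (ρ : Measure (α × Ω)) [IsFiniteMeasure ρ] (c : ℝ≥0∞)
    {B B' : Set Ω} (hB : MeasurableSet B) (hB' : MeasurableSet B')
    (h : ∀ A, MeasurableSet A → ρ (A ×ˢ B) ≤ c * ρ (A ×ˢ B')) :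
    ∀ᵐ t ∂ρ.fst, ρ.condKernel t B ≤ c * ρ.condKernel t B' := by
  refine ae_le_of_forall_setLIntegral_le_of_sigmaFinite (ρ.condKernel.measurable_coe hB)
    fun A hA _ => ?_
  rw [Measure.setLIntegral_condKernel_eq_measure_prod hA hB,
    lintegral_const_mul _ (ρ.condKernel.measurable_coe hB'),
    Measure.setLIntegral_condKernel_eq_measure_prod hA hB']
  exact h A hA

lemma max_zero_mul_sgn_xor (x : ℝ) (b : Bool) :
    max 0 (x * sgn (b ^^ decide (x < 0))) = if b then |x| else 0 := by
  rcases lt_or_ge x 0 with hx | hx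
  · cases b <;> simp [sgn, hx, abs_of_neg, hx.le]
  · cases b <;> simp [sgn, hx.not_gt, abs_of_nonneg, hx]

lemma Adjacent.map {m : ℕ} {s s' : Fin m → Bool} (h : Adjacent s s') (f : Fin m → Bool → Bool) :
    Adjacent (fun i => f i (s i)) (fun i => f i (s' i)) :=
  let ⟨j, hj⟩ := h; ⟨j, fun i hi => congrArg (f i) (hj i hi)⟩

lemma adjacent_update {m : ℕ} (s : Fin m → Bool) (j : Fin m) (b b' : Bool) :
    Adjacent (Function.update s j b) (Function.update s j b') :=
  ⟨j, fun i hi => by simp [Function.update_of_ne hi]⟩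

lemma measure_sum_max_zero_mul_sgn_le {m : ℕ} {a : ℝ} (ha : 0 ≤ a) (κ : Measure (Fin m → Bool))
    [IsProbabilityMeasure κ] (hκ : ∀ s s', Adjacent s s' → κ {s} ≤ ENNReal.ofReal a * κ {s'})
    (t : Fin m → ℝ) (v : ℝ) :
    κ {s | v ≤ ∑ i, max 0 (t i * sgn (s i))} ≤
      ENNReal.ofReal (∑ sh, {sh | v ≤ ∑ i, if sh i then |t i| else 0}.indicator
        (bernVecPr (a / (a + 1))) sh) := by
  set σ : (Fin m → Bool) → Fin m → Bool := fun s i => s i ^^ decide (t i < 0)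
  have hσ : Function.Involutive σ := fun s => by funext i; simp [σ]
  have hσm : Measurable σ := .of_discrete
  have hevent : {s | v ≤ ∑ i, max 0 (t i * sgn (s i))} =
      σ ⁻¹' {sh | v ≤ ∑ i, if sh i then |t i| else 0} := by
    have hterm (s : Fin m → Bool) (i : Fin m) :
        max 0 (t i * sgn (s i)) = if σ s i then |t i| else 0 := by
      rw [← max_zero_mul_sgn_xor]; simp [σ]
    ext s
    simp only [mem_ofPred_eq, Set.mem_preimage, hterm]
  have hup : IsUpperSet {sh : Fin m → Bool | v ≤ ∑ i, if sh i then |t i| else 0} :=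
    fun sh sh' hle (hsh : v ≤ _) => show v ≤ _ from hsh.trans <| sum_le_sum fun i _ => by
      have := hle i
      revert this
      cases sh i <;> cases sh' i <;> simp
  have : IsProbabilityMeasure (κ.map σ) := Measure.isProbabilityMeasure_map hσm.aemeasurable
  rw [hevent, ← Measure.map_apply hσm .of_discrete]
  refine measure_le_bernVecPr_of_isUpperSet ha _ (fun sh j => ?_) hup
  have hpre (x : Fin m → Bool) : σ ⁻¹' {x} = {σ x} := Set.ext fun _ => hσ.eq_iff
  rw [Measure.map_apply hσm .of_discrete, Measure.map_apply hσm .of_discrete, hpre, hpre]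
  exact hκ _ _ ((adjacent_update sh j true false).map fun i b => b ^^ decide (t i < 0))

theorem pure_dp_audit_general (m : ℕ) (ε : ℝ)
    (M : (Fin m → Bool) → Measure (Fin m → ℝ))
    (hDP : PureDP M ε)
    (ρ : Measure ((Fin m → ℝ) × (Fin m → Bool)))
    (hρ : ρ = ((PMF.uniformOfFintype (Fin m → Bool)).toMeasure).bind
        (fun s => (M s).map (fun t => (t, s))))
    [IsFiniteMeasure ρ] (v : ℝ) :
    ∀ᵐ t ∂ρ.fst,
      (ρ.condKernel t) {s : Fin m → Bool | v ≤ ∑ i, max 0 (t i * sgn (s i))}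
        ≤ ENNReal.ofReal (∑ sh : Fin m → Bool,
            bernVecPr (exp ε / (exp ε + 1)) sh *
              (if v ≤ ∑ i, (if sh i then |t i| else 0) then 1 else 0)) := by
  have hprod (s s' : Fin m → Bool) (hss' : Adjacent s s') (A : Set (Fin m → ℝ))
      (hA : MeasurableSet A) : ρ (A ×ˢ {s}) ≤ ENNReal.ofReal (exp ε) * ρ (A ×ˢ {s'}) := by
    simp only [hρ, PMF.toMeasure_bind_map_prodMk_apply _ _ hA, PMF.uniformOfFintype_apply]
    rw [mul_left_comm]
    exact mul_le_mul_right (hDP s s' hss' A hA) _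
  have hcond : ∀ᵐ t ∂ρ.fst, ∀ s s', Adjacent s s' →
      ρ.condKernel t {s} ≤ ENNReal.ofReal (exp ε) * ρ.condKernel t {s'} :=
    ae_all_iff.2 fun s => ae_all_iff.2 fun s' => Filter.eventually_imp_distrib_left.2 fun hss' =>
      ae_condKernel_le_of_prod_le ρ _ (.singleton s) (.singleton s') (hprod s s' hss')
  filter_upwards [hcond] with t ht
  convert measure_sum_max_zero_mul_sgn_le (exp_nonneg ε) _ ht t v using 3 with sh
  simp [indicator_apply]

/-- **Pure DP version of the main result.** Let `M : {-1,+1}^m → ℝ^m` be `(ε,0)`-DP, `S` uniform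
on `{-1,+1}^m` and `T = M(S)`. Then for every `v` and almost every `t` (w.r.t. the law of `T`),
`P[∑ᵢ max{0, Tᵢ·Sᵢ} ≥ v ∣ T = t] ≤ P[∑ᵢ Šᵢ·|tᵢ| ≥ v]` where the `Šᵢ` are independent
`Bernoulli(eᵉ/(eᵉ+1))`. -/
theorem pure_dp_audit (m : ℕ) (ε : ℝ) (hε : 0 ≤ ε)
    (M : (Fin m → Bool) → Measure (Fin m → ℝ))
    (hMprob : ∀ s, IsProbabilityMeasure (M s)) (hMmeas : Measurable M)
    (hDP : PureDP M ε)
    (ρ : Measure ((Fin m → ℝ) × (Fin m → Bool)))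
    (hρ : ρ = ((PMF.uniformOfFintype (Fin m → Bool)).toMeasure).bind
        (fun s => (M s).map (fun t => (t, s))))
    [IsFiniteMeasure ρ] (v : ℝ) :
    ∀ᵐ t ∂ρ.fst,
      (ρ.condKernel t) {s : Fin m → Bool | v ≤ ∑ i, max 0 (t i * sgn (s i))}
        ≤ ENNReal.ofReal (∑ sh : Fin m → Bool,
            bernVecPr (exp ε / (exp ε + 1)) sh *
              (if v ≤ ∑ i, (if sh i then |t i| else 0) then 1 else 0)) :=
  pure_dp_audit_general m ε M hDP ρ hρ v
end

section
/- Let P and Q be probability distributions over a measurable space Y such that P(A) ≤ e^ε·Q(A) + δ and Q(A) ≤ e^ε·P(A) + δ for all measurable A. Then there exist δ' ∈ [0,δ] and distributions P', Q', P'', Q'' on Y such that P = (1-δ')P' + δ'P'', Q = (1-δ')Q' + δ'Q'', and for all measurable A, e^{-ε}·P'(A) ≤ Q'(A) ≤ e^ε·P'(A); moreover there exist measurable sets S, T with P''(S)=1, Q''(T)=1, P(S') ≥ Q(S') for all measurable S' ⊆ S, and Q(T') ≥ P(T') for all measurable T' ⊆ T. -/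
/-!
Write `P = f • μ`, `Q = g • μ` with `μ = P + Q`, and let `k = e^ε`. Testing the hypothesis on
`{k g < f}` shows that the excess density `(f - k g)⁺` has mass at most `δ`, and likewise
`(g - k f)⁺`; let `δ'` be the larger of the two masses. Peel off from `f` a density `p` of mass `δ'`
with `(f - k g)⁺ ≤ p ≤ (f - k⁻¹ g) 1_{g < f}`, and symmetrically `q` from `g`: a linear
interpolation between the two bounds does it, the upper bound having enough mass because
`∫ (f - g)⁺ dμ = ∫ (g - f)⁺ dμ`. Then `k⁻¹ (f - p) ≤ g - q ≤ k (f - p)` pointwise, so normalising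
`(f - p) • μ`, `p • μ`, `(g - q) • μ` and `q • μ` gives `P'`, `P''`, `Q'` and `Q''`, with
`S = {g ≤ f}` and `T = {f ≤ g}`.
-/

open MeasureTheory Real Set
open scoped ENNReal

lemma tsub_le_mul_tsub {k a b p q : ℝ≥0∞} (hk : 1 ≤ k) (hk_top : k ≠ ∞) (ha : a ≠ ∞)
    (hp : p ≤ a - k⁻¹ * b) (hp_zero : a ≤ b → p = 0) (hq : b - k * a ≤ q) :
    b - q ≤ k * (a - p) := by
  by_cases hab : a ≤ b
  · calc b - q ≤ b - (b - k * a) := tsub_le_tsub_left hq b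
      _ ≤ k * a := tsub_tsub_le
      _ = k * (a - p) := by rw [hp_zero hab, tsub_zero]
  · have hkb : k⁻¹ * b ≤ a :=
      (mul_le_of_le_one_left' (ENNReal.inv_le_one.2 hk)).trans (not_le.1 hab).le
    calc b - q ≤ b := tsub_le_self
      _ = k * (a - (a - k⁻¹ * b)) := by
        rw [ENNReal.sub_sub_cancel ha hkb, ← mul_assoc,
          ENNReal.mul_inv_cancel (zero_lt_one.trans_le hk).ne' hk_top, one_mul]
      _ ≤ k * (a - p) := by gcongr

section Decomposition

variable {Y : Type*} [MeasurableSpace Y] {μ : Measure Y} {f g p q : Y → ℝ≥0∞} {k d : ℝ≥0∞}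

lemma lintegral_tsub_comm (hf : Measurable f) (hg : Measurable g)
    (hfg : ∫⁻ y, f y ∂μ = ∫⁻ y, g y ∂μ) (hg_top : ∫⁻ y, g y ∂μ ≠ ∞) :
    ∫⁻ y, f y - g y ∂μ = ∫⁻ y, g y - f y ∂μ := by
  have split : ∀ {u v : Y → ℝ≥0∞}, Measurable u → Measurable v →
      ∫⁻ y, u y - v y ∂μ + ∫⁻ y, min (u y) (v y) ∂μ = ∫⁻ y, u y ∂μ := fun {u v} hu hv => by
    rw [← lintegral_add_left (f := fun y => u y - v y) (hu.sub hv)]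
    exact lintegral_congr fun y => tsub_add_min
  have hmin_top : ∫⁻ y, min (f y) (g y) ∂μ ≠ ∞ :=
    ne_top_of_le_ne_top hg_top (lintegral_mono fun y => min_le_right _ _)
  rw [← ENNReal.add_left_inj hmin_top, split hf hg, hfg, ← split hg hf]
  simp_rw [min_comm (g _)]

lemma lintegral_tsub_mul_le (hf : Measurable f) (hg : Measurable g) (hk : k ≠ ∞)
    (hg_top : ∫⁻ y, g y ∂μ ≠ ∞)
    (h : ∀ A, MeasurableSet A → μ.withDensity f A ≤ k * μ.withDensity g A + d) :
    ∫⁻ y, f y - k * g y ∂μ ≤ d := by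
  set A := {y | k * g y < f y}
  have hA : MeasurableSet A := measurableSet_lt (hg.const_mul k) hf
  have hsupp : Function.support (fun y => f y - k * g y) ⊆ A := fun y hy => by
    simpa [A, tsub_eq_zero_iff_le] using hy
  have hkA_top : k * ∫⁻ y in A, g y ∂μ ≠ ∞ :=
    ENNReal.mul_ne_top hk (ne_top_of_le_ne_top hg_top (setLIntegral_le_lintegral A g))
  refine ENNReal.le_of_add_le_add_right hkA_top ?_
  calc ∫⁻ y, f y - k * g y ∂μ + k * ∫⁻ y in A, g y ∂μ
      = ∫⁻ y in A, f y - k * g y + k * g y ∂μ := by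
        rw [← setLIntegral_eq_of_support_subset hsupp,
          lintegral_add_left (f := fun y => f y - k * g y) (hf.sub (hg.const_mul k)),
          lintegral_const_mul k hg]
    _ = ∫⁻ y in A, f y ∂μ := setLIntegral_congr_fun hA fun y hy => tsub_add_cancel_of_le hy.le
    _ ≤ d + k * ∫⁻ y in A, g y ∂μ := by
        rw [add_comm, ← withDensity_apply _ hA, ← withDensity_apply _ hA]
        exact h A hA

lemma exists_measurable_between_lintegral_eq {lo hi : Y → ℝ≥0∞} (hlo : Measurable lo)
    (hhi : Measurable hi) (hle : lo ≤ hi) (hhi_top : ∫⁻ y, hi y ∂μ ≠ ∞)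
    (hlo_d : ∫⁻ y, lo y ∂μ ≤ d) (hd_hi : d ≤ ∫⁻ y, hi y ∂μ) :
    ∃ p : Y → ℝ≥0∞, Measurable p ∧ lo ≤ p ∧ p ≤ hi ∧ ∫⁻ y, p y ∂μ = d := by
  set gap := ∫⁻ y, hi y - lo y ∂μ
  have hgap : gap = ∫⁻ y, hi y ∂μ - ∫⁻ y, lo y ∂μ :=
    lintegral_sub hlo (ne_top_of_le_ne_top hhi_top (lintegral_mono hle)) (ae_of_all _ hle)
  have hd_gap : d - ∫⁻ y, lo y ∂μ ≤ gap := hgap ▸ tsub_le_tsub_right hd_hi _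
  set c := (d - ∫⁻ y, lo y ∂μ) / gap
  have hc_mul : c * gap = d - ∫⁻ y, lo y ∂μ := by
    rcases eq_or_ne gap 0 with h0 | h0
    · rw [h0, mul_zero, nonpos_iff_eq_zero.1 (h0 ▸ hd_gap : d - ∫⁻ y, lo y ∂μ ≤ 0)]
    · exact ENNReal.div_mul_cancel h0 (hgap ▸ ne_top_of_le_ne_top hhi_top tsub_le_self)
  have hc1 : c ≤ 1 := ENNReal.div_le_of_le_mul (by rwa [one_mul])
  refine ⟨fun y => lo y + c * (hi y - lo y), hlo.add ((hhi.sub hlo).const_mul c),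
    fun y => le_self_add, fun y => ?_, ?_⟩
  · calc lo y + c * (hi y - lo y) ≤ lo y + (hi y - lo y) := by
          gcongr; exact mul_le_of_le_one_left' hc1
      _ = hi y := add_tsub_cancel_of_le (hle y)
  · rw [lintegral_add_left hlo, lintegral_const_mul c (f := fun y => hi y - lo y) (hhi.sub hlo),
      hc_mul, add_tsub_cancel_of_le hlo_d]

lemma exists_le_of_lintegral_eq (hμ : μ ≠ 0) (hg : Measurable g)
    (hfg : ∫⁻ y, f y ∂μ = ∫⁻ y, g y ∂μ) (hf_top : ∫⁻ y, f y ∂μ ≠ ∞) : ∃ y, g y ≤ f y := by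
  by_contra! h
  exact (lintegral_strict_mono hμ hg.aemeasurable hf_top (ae_of_all _ h)).ne hfg

lemma exists_peel (hf : Measurable f) (hg : Measurable g) (hk : 1 ≤ k)
    (hf_top : ∫⁻ y, f y ∂μ ≠ ∞) (hd_lo : ∫⁻ y, f y - k * g y ∂μ ≤ d)
    (hd_hi : d ≤ ∫⁻ y, f y - g y ∂μ) :
    ∃ p : Y → ℝ≥0∞, Measurable p ∧ (∀ y, f y - k * g y ≤ p y) ∧ (∀ y, p y ≤ f y - k⁻¹ * g y) ∧
      (∀ y, f y ≤ g y → p y = 0) ∧ ∫⁻ y, p y ∂μ = d := by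
  have hk_inv : k⁻¹ ≤ 1 := ENNReal.inv_le_one.2 hk
  set hi : Y → ℝ≥0∞ := fun y => if g y < f y then f y - k⁻¹ * g y else 0
  have hlo_hi : ∀ y, f y - k * g y ≤ hi y := fun y => by
    by_cases h : g y < f y
    · simpa only [hi, if_pos h] using tsub_le_tsub_left (mul_le_mul_left (hk_inv.trans hk) _) _
    · simpa only [hi, if_neg h, nonpos_iff_eq_zero, tsub_eq_zero_iff_le] using
        (not_lt.1 h).trans (le_mul_of_one_le_left' hk)
  have hgap_hi : ∀ y, f y - g y ≤ hi y := fun y => by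
    by_cases h : g y < f y
    · simpa only [hi, if_pos h] using tsub_le_tsub_left (mul_le_of_le_one_left' hk_inv) _
    · simpa only [hi, if_neg h, nonpos_iff_eq_zero, tsub_eq_zero_iff_le] using not_lt.1 h
  have hhi_le : ∀ y, hi y ≤ f y - k⁻¹ * g y := fun y => by
    by_cases h : g y < f y <;> simp only [hi, h, if_true, if_false, le_refl, zero_le]
  obtain ⟨p, hp, hlo_p, hp_hi, hp_int⟩ := exists_measurable_between_lintegral_eq
    (hf.sub (hg.const_mul k)) (Measurable.ite (measurableSet_lt hg hf) (hf.sub (hg.const_mul _))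
      measurable_const) hlo_hi
    (ne_top_of_le_ne_top hf_top (lintegral_mono fun y => (hhi_le y).trans tsub_le_self)) hd_lo
    (hd_hi.trans (lintegral_mono hgap_hi))
  refine ⟨p, hp, hlo_p, fun y => (hp_hi y).trans (hhi_le y), fun y hfg => ?_, hp_int⟩
  simpa only [hi, if_neg hfg.not_gt, nonpos_iff_eq_zero] using hp_hi y

structure IsPeeling (μ : Measure Y) (k d : ℝ≥0∞) (f g p q : Y → ℝ≥0∞) : Prop where
  measurable_left : Measurable p
  measurable_right : Measurable q
  le_left : p ≤ f
  le_right : q ≤ g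
  lintegral_left : ∫⁻ y, p y ∂μ = d
  lintegral_right : ∫⁻ y, q y ∂μ = d
  eq_zero_left : ∀ y, f y ≤ g y → p y = 0
  eq_zero_right : ∀ y, g y ≤ f y → q y = 0
  tsub_le_left : ∀ y, f y - p y ≤ k * (g y - q y)
  tsub_le_right : ∀ y, g y - q y ≤ k * (f y - p y)

lemma IsPeeling.symm (h : IsPeeling μ k d f g p q) : IsPeeling μ k d g f q p :=
  ⟨h.measurable_right, h.measurable_left, h.le_right, h.le_left, h.lintegral_right,
    h.lintegral_left, h.eq_zero_right, h.eq_zero_left, h.tsub_le_right, h.tsub_le_left⟩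

lemma exists_isPeeling (hf : Measurable f) (hg : Measurable g)
    (hf_ne_top : ∀ y, f y ≠ ∞) (hg_ne_top : ∀ y, g y ≠ ∞)
    (hfg : ∫⁻ y, f y ∂μ = ∫⁻ y, g y ∂μ) (hg_top : ∫⁻ y, g y ∂μ ≠ ∞) (hk : 1 ≤ k) (hk_top : k ≠ ∞)
    (hfd : ∫⁻ y, f y - k * g y ∂μ ≤ d) (hgd : ∫⁻ y, g y - k * f y ∂μ ≤ d) :
    ∃ d' ≤ d, ∃ p q : Y → ℝ≥0∞, IsPeeling μ k d' f g p q := by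
  set d' := max (∫⁻ y, f y - k * g y ∂μ) (∫⁻ y, g y - k * f y ∂μ)
  have hgap := lintegral_tsub_comm hf hg hfg hg_top
  have hd'_gap : d' ≤ ∫⁻ y, f y - g y ∂μ := by
    refine max_le (lintegral_mono fun y => ?_) (hgap ▸ lintegral_mono fun y => ?_) <;>
      exact tsub_le_tsub_left (le_mul_of_one_le_left' hk) _
  obtain ⟨p, hp, hp_lo, hp_hi, hp_zero, hp_int⟩ :=
    exists_peel hf hg hk (hfg ▸ hg_top) (le_max_left _ _) hd'_gap
  obtain ⟨q, hq, hq_lo, hq_hi, hq_zero, hq_int⟩ :=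
    exists_peel hg hf hk hg_top (le_max_right _ _) (hgap ▸ hd'_gap)
  exact ⟨d', max_le hfd hgd, p, q, hp, hq, fun y => (hp_hi y).trans tsub_le_self,
    fun y => (hq_hi y).trans tsub_le_self, hp_int, hq_int, hp_zero, hq_zero,
    fun y => tsub_le_mul_tsub hk hk_top (hg_ne_top y) (hq_hi y) (hq_zero y) (hp_lo y),
    fun y => tsub_le_mul_tsub hk hk_top (hf_ne_top y) (hp_hi y) (hp_zero y) (hq_lo y)⟩

lemma withDensity_tsub_add_withDensity (hf : Measurable f) (hp : Measurable p)
    (hpf : p ≤ f) : μ.withDensity (f - p) + μ.withDensity p = μ.withDensity f := by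
  rw [← withDensity_add_left (hf.sub hp), tsub_add_cancel_of_le hpf]

lemma withDensity_apply_le_of_subset (hf : Measurable f) {S : Set Y} (hS : MeasurableSet S)
    (hsub : S ⊆ {y | g y ≤ f y}) : μ.withDensity g S ≤ μ.withDensity f S := by
  rw [withDensity_apply _ hS, withDensity_apply _ hS]
  exact setLIntegral_mono hf fun y hy => hsub hy

lemma withDensity_compl_setOf_le_eq_zero (hf : Measurable f) (hg : Measurable g)
    (hp_zero : ∀ y, f y ≤ g y → p y = 0) : μ.withDensity p {y | g y ≤ f y}ᶜ = 0 := by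
  have hS : MeasurableSet {y | g y ≤ f y}ᶜ := (measurableSet_le hg hf).compl
  rw [withDensity_apply _ hS,
    setLIntegral_congr_fun hS fun y hy => hp_zero y (not_le.1 (show ¬g y ≤ f y from hy)).le,
    lintegral_zero]

lemma exists_ne_top_density (P μ : Measure Y) [SigmaFinite P] [SigmaFinite μ]
    (hPμ : P ≪ μ) : ∃ f : Y → ℝ≥0∞, Measurable f ∧ (∀ y, f y ≠ ∞) ∧ μ.withDensity f = P := by
  refine ⟨fun y => (P.rnDeriv μ y).toNNReal,
    (Measure.measurable_rnDeriv P μ).ennreal_toNNReal.coe_nnreal_ennreal,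
    fun y => ENNReal.coe_ne_top, ?_⟩
  refine (withDensity_congr_ae ?_).trans (Measure.withDensity_rnDeriv_eq P μ hPμ)
  filter_upwards [Measure.rnDeriv_ne_top P μ] with y hy using ENNReal.coe_toNNReal hy

variable {ν ν' ρ : Measure Y}

noncomputable def normalizeOr (ν ρ : Measure Y) : Measure Y :=
  if ν univ = 0 then ρ else (ν univ)⁻¹ • ν

lemma normalizeOr_of_eq_zero (h : ν univ = 0) : normalizeOr ν ρ = ρ := if_pos h

lemma normalizeOr_of_ne_zero (h : ν univ ≠ 0) : normalizeOr ν ρ = (ν univ)⁻¹ • ν := if_neg h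

lemma isProbabilityMeasure_normalizeOr [IsProbabilityMeasure ρ] (hν : ν univ ≠ ∞) :
    IsProbabilityMeasure (normalizeOr ν ρ) := by
  by_cases h : ν univ = 0
  · rwa [normalizeOr_of_eq_zero h]
  · constructor
    rw [normalizeOr_of_ne_zero h, Measure.smul_apply, smul_eq_mul, ENNReal.inv_mul_cancel h hν]

lemma measure_univ_smul_normalizeOr (hν : ν univ ≠ ∞) : ν univ • normalizeOr ν ρ = ν := by
  by_cases h : ν univ = 0
  · rw [h, zero_smul, Measure.measure_univ_eq_zero.1 h]
  · rw [normalizeOr_of_ne_zero h, smul_smul, ENNReal.mul_inv_cancel h hν, one_smul]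

lemma normalizeOr_le_smul {c : ℝ≥0∞} (hc : 1 ≤ c) (huniv : ν univ = ν' univ) (h : ν ≤ c • ν') :
    normalizeOr ν ρ ≤ c • normalizeOr ν' ρ := by
  intro A
  by_cases h0 : ν' univ = 0
  · rw [normalizeOr_of_eq_zero h0, normalizeOr_of_eq_zero (huniv ▸ h0), Measure.smul_apply,
      smul_eq_mul]
    exact le_mul_of_one_le_left' hc
  · rw [normalizeOr_of_ne_zero h0, normalizeOr_of_ne_zero (huniv ▸ h0), huniv]
    simp only [Measure.smul_apply, smul_eq_mul]
    rw [mul_left_comm]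
    gcongr
    exact h A

lemma normalizeOr_apply_eq_one {S : Set Y} (hν : ν univ ≠ ∞) (hS : MeasurableSet S)
    (hνS : ν Sᶜ = 0) (hρS : ρ S = 1) : normalizeOr ν ρ S = 1 := by
  by_cases h : ν univ = 0
  · rwa [normalizeOr_of_eq_zero h]
  · have hνS' : ν S = ν univ := by rw [← measure_add_measure_compl hS, hνS, add_zero]
    rw [normalizeOr_of_ne_zero h, Measure.smul_apply, smul_eq_mul, hνS',
      ENNReal.inv_mul_cancel h hν]

namespace IsPeeling

lemma le_one (h : IsPeeling μ k d f g p q) (hf_int : ∫⁻ y, f y ∂μ = 1) : d ≤ 1 :=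
  hf_int ▸ h.lintegral_left ▸ lintegral_mono h.le_left

lemma withDensity_apply_univ (h : IsPeeling μ k d f g p q) : μ.withDensity p univ = d := by
  rw [withDensity_apply _ .univ, setLIntegral_univ, h.lintegral_left]

lemma withDensity_tsub_apply_univ (h : IsPeeling μ k d f g p q) (hf_int : ∫⁻ y, f y ∂μ = 1) :
    μ.withDensity (f - p) univ = 1 - d := by
  have hp_top : ∫⁻ y, p y ∂μ ≠ ∞ :=
    h.lintegral_left ▸ ne_top_of_le_ne_top ENNReal.one_ne_top (h.le_one hf_int)
  rw [withDensity_apply _ .univ, setLIntegral_univ, ← hf_int, ← h.lintegral_left,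
    ← lintegral_sub h.measurable_left hp_top (ae_of_all _ h.le_left)]
  rfl

lemma isProbabilityMeasure_normalizeOr_tsub (h : IsPeeling μ k d f g p q)
    (hf_int : ∫⁻ y, f y ∂μ = 1) [IsProbabilityMeasure ρ] :
    IsProbabilityMeasure (normalizeOr (μ.withDensity (f - p)) ρ) :=
  isProbabilityMeasure_normalizeOr <| (h.withDensity_tsub_apply_univ hf_int).trans_ne <|
    ne_top_of_le_ne_top ENNReal.one_ne_top tsub_le_self

lemma isProbabilityMeasure_normalizeOr (h : IsPeeling μ k d f g p q)
    (hf_int : ∫⁻ y, f y ∂μ = 1) [IsProbabilityMeasure ρ] :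
    IsProbabilityMeasure (normalizeOr (μ.withDensity p) ρ) :=
  _root_.isProbabilityMeasure_normalizeOr <| h.withDensity_apply_univ.trans_ne <|
    ne_top_of_le_ne_top ENNReal.one_ne_top (h.le_one hf_int)

lemma withDensity_eq (h : IsPeeling μ k d f g p q) (hf : Measurable f)
    (hf_int : ∫⁻ y, f y ∂μ = 1) (ρ ρ' : Measure Y) :
    μ.withDensity f =
      (1 - d) • normalizeOr (μ.withDensity (f - p)) ρ + d • normalizeOr (μ.withDensity p) ρ' := by
  have hd_top : d ≠ ∞ := ne_top_of_le_ne_top ENNReal.one_ne_top (h.le_one hf_int)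
  have h1d_top : 1 - d ≠ ∞ := ne_top_of_le_ne_top ENNReal.one_ne_top tsub_le_self
  rw [← h.withDensity_tsub_apply_univ hf_int, ← h.withDensity_apply_univ,
    measure_univ_smul_normalizeOr (h.withDensity_tsub_apply_univ hf_int ▸ h1d_top),
    measure_univ_smul_normalizeOr (h.withDensity_apply_univ ▸ hd_top),
    withDensity_tsub_add_withDensity hf h.measurable_left h.le_left]

lemma normalizeOr_le_smul (h : IsPeeling μ k d f g p q) (hk : 1 ≤ k) (hg : Measurable g)
    (hf_int : ∫⁻ y, f y ∂μ = 1) (hg_int : ∫⁻ y, g y ∂μ = 1) :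
    normalizeOr (μ.withDensity (f - p)) ρ ≤ k • normalizeOr (μ.withDensity (g - q)) ρ := by
  refine _root_.normalizeOr_le_smul hk ?_ ?_
  · rw [h.withDensity_tsub_apply_univ hf_int, h.symm.withDensity_tsub_apply_univ hg_int]
  · rw [← withDensity_smul k (hg.sub h.measurable_right)]
    exact withDensity_mono (ae_of_all _ h.tsub_le_left)

lemma normalizeOr_setOf_le_eq_one (h : IsPeeling μ k d f g p q) (hf : Measurable f)
    (hg : Measurable g) (hf_int : ∫⁻ y, f y ∂μ = 1) (hρ : ρ {y | g y ≤ f y} = 1) :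
    normalizeOr (μ.withDensity p) ρ {y | g y ≤ f y} = 1 :=
  normalizeOr_apply_eq_one (h.withDensity_apply_univ.trans_ne <|
      ne_top_of_le_ne_top ENNReal.one_ne_top (h.le_one hf_int))
    (measurableSet_le hg hf) (withDensity_compl_setOf_le_eq_zero hf hg h.eq_zero_left) hρ

end IsPeeling

theorem exists_decomposition_of_le_mul_add (P Q : Measure Y) [IsProbabilityMeasure P]
    [IsProbabilityMeasure Q] (hk : 1 ≤ k) (hk_top : k ≠ ∞)
    (hPQ : ∀ A, MeasurableSet A → P A ≤ k * Q A + d)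
    (hQP : ∀ A, MeasurableSet A → Q A ≤ k * P A + d) :
    ∃ d' ≤ d, d' ≤ 1 ∧ ∃ P' Q' P'' Q'' : Measure Y,
      IsProbabilityMeasure P' ∧ IsProbabilityMeasure Q' ∧
      IsProbabilityMeasure P'' ∧ IsProbabilityMeasure Q'' ∧
      P = (1 - d') • P' + d' • P'' ∧ Q = (1 - d') • Q' + d' • Q'' ∧
      P' ≤ k • Q' ∧ Q' ≤ k • P' ∧
      ∃ S T : Set Y, MeasurableSet S ∧ MeasurableSet T ∧ P'' S = 1 ∧ Q'' T = 1 ∧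
        (∀ S', MeasurableSet S' → S' ⊆ S → Q S' ≤ P S') ∧
        (∀ T', MeasurableSet T' → T' ⊆ T → P T' ≤ Q T') := by
  set μ := P + Q
  obtain ⟨f, hf, hf_ne_top, hPf⟩ :=
    exists_ne_top_density P μ (Measure.AbsolutelyContinuous.rfl.add_right Q)
  obtain ⟨g, hg, hg_ne_top, hQg⟩ :=
    exists_ne_top_density Q μ (Measure.AbsolutelyContinuous.rfl.add_right' P)
  have hf_int : ∫⁻ y, f y ∂μ = 1 := by
    rw [← setLIntegral_univ, ← withDensity_apply _ .univ, hPf, measure_univ]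
  have hg_int : ∫⁻ y, g y ∂μ = 1 := by
    rw [← setLIntegral_univ, ← withDensity_apply _ .univ, hQg, measure_univ]
  have hf_top : ∫⁻ y, f y ∂μ ≠ ∞ := hf_int ▸ ENNReal.one_ne_top
  have hg_top : ∫⁻ y, g y ∂μ ≠ ∞ := hg_int ▸ ENNReal.one_ne_top
  obtain ⟨d', hd'd, p, q, h⟩ :=
    exists_isPeeling hf hg hf_ne_top hg_ne_top (hf_int.trans hg_int.symm) hg_top hk hk_top
      (lintegral_tsub_mul_le hf hg hk_top hg_top (by rwa [hPf, hQg]))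
      (lintegral_tsub_mul_le hg hf hk_top hf_top (by rwa [hPf, hQg]))
  have hμ : μ ≠ 0 := fun h0 => by simp [h0] at hf_int
  -- Dirac masses at `y₀ ∈ S` and `y₁ ∈ T` serve as `P''` and `Q''` when `d' = 0`.
  obtain ⟨y₀, hy₀⟩ := exists_le_of_lintegral_eq hμ hg (hf_int.trans hg_int.symm) hf_top
  obtain ⟨y₁, hy₁⟩ := exists_le_of_lintegral_eq hμ hf (hg_int.trans hf_int.symm) hg_top
  refine ⟨d', hd'd, h.le_one hf_int, _, _, _, _,
    h.isProbabilityMeasure_normalizeOr_tsub hf_int (ρ := P),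
    h.symm.isProbabilityMeasure_normalizeOr_tsub hg_int (ρ := P),
    h.isProbabilityMeasure_normalizeOr hf_int (ρ := .dirac y₀),
    h.symm.isProbabilityMeasure_normalizeOr hg_int (ρ := .dirac y₁),
    hPf ▸ h.withDensity_eq hf hf_int P (.dirac y₀),
    hQg ▸ h.symm.withDensity_eq hg hg_int P (.dirac y₁),
    h.normalizeOr_le_smul hk hg hf_int hg_int, h.symm.normalizeOr_le_smul hk hf hg_int hf_int,
    {y | g y ≤ f y}, {y | f y ≤ g y}, measurableSet_le hg hf, measurableSet_le hf hg,
    h.normalizeOr_setOf_le_eq_one hf hg hf_int (Measure.dirac_apply_of_mem hy₀),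
    h.symm.normalizeOr_setOf_le_eq_one hg hf hg_int (Measure.dirac_apply_of_mem hy₁),
    fun S' hS' hsub => hPf ▸ hQg ▸ withDensity_apply_le_of_subset hf hS' hsub,
    fun T' hT' hsub => hPf ▸ hQg ▸ withDensity_apply_le_of_subset hg hT' hsub⟩

end Decomposition

/-- **Decomposition of an indistinguishable pair** (Kairouz–Oh–Viswanath).
If `P(A) ≤ eᵉ·Q(A) + δ` and `Q(A) ≤ eᵉ·P(A) + δ` for all measurable `A`, then there are
`δ' ∈ [0,δ]` and probability measures `P', Q', P'', Q''` with
`P = (1-δ')P' + δ'P''`, `Q = (1-δ')Q' + δ'Q''`,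
`e⁻ᵉ·P'(A) ≤ Q'(A) ≤ eᵉ·P'(A)` for all measurable `A`, and measurable sets `S, T` with
`P''(S) = 1`, `Q''(T) = 1`, `P ≥ Q` on all measurable subsets of `S` and `Q ≥ P` on all
measurable subsets of `T`. -/
theorem indistinguishable_decomposition {Y : Type*} [MeasurableSpace Y]
    (P Q : Measure Y) [IsProbabilityMeasure P] [IsProbabilityMeasure Q]
    (ε δ : ℝ) (hε : 0 ≤ ε) (hδ : 0 ≤ δ)
    (hPQ : ∀ A : Set Y, MeasurableSet A → P A ≤ ENNReal.ofReal (exp ε) * Q A + ENNReal.ofReal δ)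
    (hQP : ∀ A : Set Y, MeasurableSet A → Q A ≤ ENNReal.ofReal (exp ε) * P A + ENNReal.ofReal δ) :
    ∃ (δ' : ℝ) (P' Q' P'' Q'' : Measure Y),
      0 ≤ δ' ∧ δ' ≤ δ ∧
      IsProbabilityMeasure P' ∧ IsProbabilityMeasure Q' ∧
      IsProbabilityMeasure P'' ∧ IsProbabilityMeasure Q'' ∧
      P = ENNReal.ofReal (1 - δ') • P' + ENNReal.ofReal δ' • P'' ∧
      Q = ENNReal.ofReal (1 - δ') • Q' + ENNReal.ofReal δ' • Q'' ∧
      (∀ A : Set Y, MeasurableSet A →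
        ENNReal.ofReal (exp (-ε)) * P' A ≤ Q' A ∧ Q' A ≤ ENNReal.ofReal (exp ε) * P' A) ∧
      ∃ S T : Set Y, MeasurableSet S ∧ MeasurableSet T ∧
        P'' S = 1 ∧ Q'' T = 1 ∧
        (∀ S' : Set Y, MeasurableSet S' → S' ⊆ S → Q S' ≤ P S') ∧
        (∀ T' : Set Y, MeasurableSet T' → T' ⊆ T → P T' ≤ Q T') := by
  set k := ENNReal.ofReal (exp ε)
  have hk : 1 ≤ k := ENNReal.one_le_ofReal.2 (one_le_exp hε)
  obtain ⟨d', hd'δ, hd'1, P', Q', P'', Q'', hP', hQ', hP'', hQ'', hP, hQ, hPQ', hQP', hST⟩ :=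
    exists_decomposition_of_le_mul_add P Q hk ENNReal.ofReal_ne_top hPQ hQP
  have hd' : ENNReal.ofReal d'.toReal = d' :=
    ENNReal.ofReal_toReal (ne_top_of_le_ne_top ENNReal.one_ne_top hd'1)
  have h1d' : ENNReal.ofReal (1 - d'.toReal) = 1 - d' := by
    rw [ENNReal.ofReal_sub _ ENNReal.toReal_nonneg, ENNReal.ofReal_one, hd']
  refine ⟨d'.toReal, P', Q', P'', Q'', ENNReal.toReal_nonneg,
    ENNReal.toReal_le_of_le_ofReal hδ hd'δ, hP', hQ', hP'', hQ'', by rwa [h1d', hd'],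
    by rwa [h1d', hd'], fun A _ => ⟨?_, hQP' A⟩, hST⟩
  rw [exp_neg, ENNReal.ofReal_inv_of_pos (exp_pos ε),
    ENNReal.inv_mul_le_iff (zero_lt_one.trans_le hk).ne' ENNReal.ofReal_ne_top]
  exact hPQ' A
end

section
/- Let P and Q be distributions on Y satisfying P(A) ≤ e^ε·Q(A) + δ and Q(A) ≤ e^ε·P(A) + δ for all measurable A. Then there exists a randomized function E : Y → {0,1} such that: (1) for X ~ Bernoulli(p) and Y drawn from P if X=1 and Q if X=0, the conditional probability P[X=1 ∧ E(Y)=1 | Y=y] ≤ p/(p + (1-p)e^{-ε}) for all y; and (2) E[E(Y)] ≥ 1-δ under both Y ~ P and Y ~ Q. -/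
open MeasureTheory Real
open scoped ENNReal

/-! Let `μ = p P + (1 - p) Q`, `f = dP/dμ`, `g = dQ/dμ`, so that `p f + (1 - p) g = 1`. With
`c = 1 / (p + (1 - p) e^{-ε})`, accept `y` with probability `e(y) = min 1 (c / f(y))`;
then `p f(y) e(y) ≤ p c`, which is (1). Where `f > c`, the identity `p f + (1 - p) g = 1` forces
`e^ε g ≤ c`, so the rejected `P`-mass `∫ (f - c)⁺ dμ` is at most `∫ (f - e^ε g)⁺ dμ`, which is
`P(A) - e^ε Q(A)` for `A = {e^ε g < f}` and hence at most `δ`. Since also `g ≤ f` where `f > c`,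
the rejected `Q`-mass is at most the rejected `P`-mass. -/

-- `min 1 (c / t)`, written so that `t = 0` (where `c / 0 = 0`) is accepted with probability `1`.
noncomputable def acceptance (c t : ℝ) : ℝ := if t ≤ c then 1 else c / t

section Acceptance

variable {c t : ℝ}

lemma acceptance_of_le (h : t ≤ c) : acceptance c t = 1 := if_pos h

lemma acceptance_of_lt (h : c < t) : acceptance c t = c / t := if_neg h.not_ge

@[fun_prop]
lemma measurable_acceptance (c : ℝ) : Measurable (acceptance c) :=
  Measurable.ite measurableSet_Iic measurable_const (measurable_const.div measurable_id)

lemma acceptance_mem_Icc (hc : 0 ≤ c) : acceptance c t ∈ Set.Icc 0 1 := by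
  rcases le_or_gt t c with h | h
  · simp [acceptance_of_le h]
  · rw [acceptance_of_lt h]
    exact ⟨div_nonneg hc (hc.trans h.le), div_le_one_of_le₀ h.le (hc.trans h.le)⟩

lemma mul_acceptance_le (hc : 0 ≤ c) : t * acceptance c t ≤ c := by
  rcases le_or_gt t c with h | h
  · simpa [acceptance_of_le h]
  · rw [acceptance_of_lt h, mul_div_cancel₀ _ (hc.trans_lt h).ne']

lemma mul_ofReal_one_sub_acceptance (hc : 0 ≤ c) {x : ℝ≥0∞} (hx : x ≠ ∞) :
    x * ENNReal.ofReal (1 - acceptance c x.toReal) = x - ENNReal.ofReal c := by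
  rcases le_or_gt x.toReal c with h | h
  · rw [acceptance_of_le h, sub_self, ENNReal.ofReal_zero, mul_zero, eq_comm, tsub_eq_zero_iff_le,
      ENNReal.le_ofReal_iff_toReal_le hx hc]
    exact h
  · have hx0 : x.toReal ≠ 0 := (hc.trans_lt h).ne'
    rw [acceptance_of_lt h, ← ENNReal.ofReal_toReal hx, ← ENNReal.ofReal_mul ENNReal.toReal_nonneg,
      ← ENNReal.ofReal_sub _ hc, ENNReal.toReal_ofReal ENNReal.toReal_nonneg]
    congr 1
    field_simp

end Acceptance

lemma one_sub_le_integral_of_lintegral_le {Y : Type*} [MeasurableSpace Y] {ν : Measure Y}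
    [IsProbabilityMeasure ν] {e : Y → ℝ} {δ : ℝ} (he : Measurable e)
    (he01 : ∀ y, e y ∈ Set.Icc 0 1) (hδ : 0 ≤ δ)
    (h : ∫⁻ y, ENNReal.ofReal (1 - e y) ∂ν ≤ ENNReal.ofReal δ) : 1 - δ ≤ ∫ y, e y ∂ν := by
  have hint : Integrable e ν := Integrable.of_bound he.aestronglyMeasurable 1 <|
    ae_of_all _ fun y => by
      rw [Real.norm_eq_abs, abs_le]; constructor <;> linarith [(he01 y).1, (he01 y).2]
  have hsub : ∫ y, (1 - e y) ∂ν = (∫⁻ y, ENNReal.ofReal (1 - e y) ∂ν).toReal :=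
    integral_eq_lintegral_of_nonneg_ae (ae_of_all _ fun y => sub_nonneg.2 (he01 y).2)
      (measurable_const.sub he).aestronglyMeasurable
  rw [integral_sub (integrable_const 1) hint, integral_const, probReal_univ, one_smul] at hsub
  linarith [ENNReal.toReal_le_of_le_ofReal hδ h]

section Densities

variable {Y : Type*} [MeasurableSpace Y] {μ P Q : Measure Y}

lemma lintegral_tsub_le_of_forall_setLIntegral_le {f g : Y → ℝ≥0∞} {δ : ℝ≥0∞}
    (hf : Measurable f) (hg : Measurable g) (hg_fin : ∫⁻ y, g y ∂μ ≠ ∞)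
    (h : ∀ A, MeasurableSet A → ∫⁻ y in A, f y ∂μ ≤ ∫⁻ y in A, g y ∂μ + δ) :
    ∫⁻ y, f y - g y ∂μ ≤ δ := by
  set A := {y | g y < f y}
  have hA : MeasurableSet A := measurableSet_lt hg hf
  have hsupp : ∫⁻ y in A, f y - g y ∂μ = ∫⁻ y, f y - g y ∂μ :=
    setLIntegral_eq_of_support_subset fun y hy =>
      lt_of_not_ge fun hle => hy (tsub_eq_zero_of_le hle)
  rw [← hsupp, lintegral_sub hg (ne_top_of_le_ne_top hg_fin (setLIntegral_le_lintegral A g))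
    ((ae_restrict_iff' hA).2 (ae_of_all _ fun y hy => le_of_lt hy)), tsub_le_iff_left]
  exact h A hA

lemma lintegral_rnDeriv_tsub_le [IsFiniteMeasure Q] [P.HaveLebesgueDecomposition μ]
    [Q.HaveLebesgueDecomposition μ] (hPμ : P ≪ μ) (hQμ : Q ≪ μ) {C δ : ℝ≥0∞} (hC : C ≠ ∞)
    (h : ∀ A, MeasurableSet A → P A ≤ C * Q A + δ) :
    ∫⁻ y, P.rnDeriv μ y - C * Q.rnDeriv μ y ∂μ ≤ δ := by
  have hg := (Q.measurable_rnDeriv μ).const_mul C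
  refine lintegral_tsub_le_of_forall_setLIntegral_le (P.measurable_rnDeriv μ) hg ?_ fun A hA => ?_
  · rw [lintegral_const_mul _ (Q.measurable_rnDeriv μ), Measure.lintegral_rnDeriv hQμ]
    exact ENNReal.mul_ne_top hC (measure_ne_top Q _)
  · rw [lintegral_const_mul _ (Q.measurable_rnDeriv μ), Measure.setLIntegral_rnDeriv' hPμ hA,
      Measure.setLIntegral_rnDeriv' hQμ hA]
    exact h A hA

lemma ae_mul_rnDeriv_add_mul_rnDeriv_eq_one (P Q : Measure Y) [IsFiniteMeasure P]
    [IsFiniteMeasure Q] {a b : ℝ≥0∞} (ha : a ≠ ∞) (hb : b ≠ ∞) :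
    ∀ᵐ y ∂(a • P + b • Q),
      a * P.rnDeriv (a • P + b • Q) y + b * Q.rnDeriv (a • P + b • Q) y = 1 := by
  have := P.smul_finite ha
  have := Q.smul_finite hb
  filter_upwards [Measure.rnDeriv_self (a • P + b • Q), Measure.rnDeriv_add (a • P) (b • Q) _,
    Measure.rnDeriv_smul_left_of_ne_top P _ ha, Measure.rnDeriv_smul_left_of_ne_top Q _ hb]
    with y hself hadd hP hQ
  rw [← hself, hadd, Pi.add_apply, hP, hQ]
  rfl

lemma exp_mul_le_of_convex_combination_eq_one {p t s c ε : ℝ} (hp0 : 0 ≤ p) (hp1 : p < 1)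
    (hsum : p * t + (1 - p) * s = 1) (hc : c * (p + (1 - p) * exp (-ε)) = 1) (hct : c < t) :
    exp ε * s ≤ c := by
  have hs : s ≤ exp (-ε) * c :=
    le_of_mul_le_mul_left (by nlinarith) (sub_pos.2 hp1)
  calc exp ε * s ≤ exp ε * (exp (-ε) * c) := by gcongr
    _ = c := by rw [← mul_assoc, ← exp_add, add_neg_cancel, exp_zero, one_mul]

lemma ae_exp_mul_toReal_rnDeriv_le (P Q : Measure Y) [IsFiniteMeasure P] [IsFiniteMeasure Q]
    {p c ε : ℝ} (hp0 : 0 ≤ p) (hp1 : p < 1) (hc : c * (p + (1 - p) * exp (-ε)) = 1) :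
    ∀ᵐ y ∂(ENNReal.ofReal p • P + ENNReal.ofReal (1 - p) • Q),
      c < (P.rnDeriv (ENNReal.ofReal p • P + ENNReal.ofReal (1 - p) • Q) y).toReal →
        exp ε * (Q.rnDeriv (ENNReal.ofReal p • P + ENNReal.ofReal (1 - p) • Q) y).toReal ≤ c := by
  filter_upwards [ae_mul_rnDeriv_add_mul_rnDeriv_eq_one P Q ENNReal.ofReal_ne_top
    ENNReal.ofReal_ne_top, Measure.rnDeriv_lt_top P _, Measure.rnDeriv_lt_top Q _]
    with y hsum hf hg
  refine exp_mul_le_of_convex_combination_eq_one hp0 hp1 ?_ hc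
  have := congrArg ENNReal.toReal hsum
  rwa [ENNReal.toReal_add (ENNReal.mul_ne_top ENNReal.ofReal_ne_top hf.ne)
    (ENNReal.mul_ne_top ENNReal.ofReal_ne_top hg.ne), ENNReal.toReal_mul, ENNReal.toReal_mul,
    ENNReal.toReal_ofReal hp0, ENNReal.toReal_ofReal (sub_pos.2 hp1).le,
    ENNReal.toReal_one] at this

lemma lintegral_ofReal_one_sub_acceptance_le [IsFiniteMeasure P] [IsFiniteMeasure Q]
    [P.HaveLebesgueDecomposition μ] [Q.HaveLebesgueDecomposition μ] (hPμ : P ≪ μ) (hQμ : Q ≪ μ)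
    {c ε : ℝ} {δ : ℝ≥0∞} (hc : 0 ≤ c)
    (hratio : ∀ᵐ y ∂μ, c < (P.rnDeriv μ y).toReal → exp ε * (Q.rnDeriv μ y).toReal ≤ c)
    (hPQ : ∀ A, MeasurableSet A → P A ≤ ENNReal.ofReal (exp ε) * Q A + δ) :
    ∫⁻ y, ENNReal.ofReal (1 - acceptance c (P.rnDeriv μ y).toReal) ∂P ≤ δ := by
  have hm : Measurable fun y => ENNReal.ofReal (1 - acceptance c (P.rnDeriv μ y).toReal) := by
    fun_prop
  rw [← lintegral_rnDeriv_mul hPμ hm.aemeasurable]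
  calc ∫⁻ y, P.rnDeriv μ y * ENNReal.ofReal (1 - acceptance c (P.rnDeriv μ y).toReal) ∂μ
      = ∫⁻ y, P.rnDeriv μ y - ENNReal.ofReal c ∂μ := by
        refine lintegral_congr_ae ?_
        filter_upwards [Measure.rnDeriv_lt_top P μ] with y hf
        exact mul_ofReal_one_sub_acceptance hc hf.ne
    _ ≤ ∫⁻ y, P.rnDeriv μ y - ENNReal.ofReal (exp ε) * Q.rnDeriv μ y ∂μ := by
        refine lintegral_mono_ae ?_
        filter_upwards [hratio, Measure.rnDeriv_lt_top P μ, Measure.rnDeriv_lt_top Q μ]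
          with y hy hf hg
        rcases le_or_gt (P.rnDeriv μ y).toReal c with h | h
        · rw [tsub_eq_zero_of_le ((ENNReal.le_ofReal_iff_toReal_le hf.ne hc).2 h)]
          exact zero_le
        · gcongr
          rw [← ENNReal.ofReal_toReal hg.ne, ← ENNReal.ofReal_mul (exp_pos ε).le]
          exact ENNReal.ofReal_le_ofReal (hy h)
    _ ≤ δ := lintegral_rnDeriv_tsub_le hPμ hQμ ENNReal.ofReal_ne_top hPQ

lemma lintegral_ofReal_one_sub_acceptance_le_lintegral [IsFiniteMeasure P] [IsFiniteMeasure Q]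
    [P.HaveLebesgueDecomposition μ] [Q.HaveLebesgueDecomposition μ] (hPμ : P ≪ μ) (hQμ : Q ≪ μ)
    {c ε : ℝ} (hε : 0 ≤ ε)
    (hratio : ∀ᵐ y ∂μ, c < (P.rnDeriv μ y).toReal → exp ε * (Q.rnDeriv μ y).toReal ≤ c) :
    ∫⁻ y, ENNReal.ofReal (1 - acceptance c (P.rnDeriv μ y).toReal) ∂Q ≤
      ∫⁻ y, ENNReal.ofReal (1 - acceptance c (P.rnDeriv μ y).toReal) ∂P := by
  have hm : Measurable fun y => ENNReal.ofReal (1 - acceptance c (P.rnDeriv μ y).toReal) := by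
    fun_prop
  rw [← lintegral_rnDeriv_mul hQμ hm.aemeasurable,
    ← lintegral_rnDeriv_mul hPμ hm.aemeasurable]
  refine lintegral_mono_ae ?_
  filter_upwards [hratio, Measure.rnDeriv_lt_top P μ, Measure.rnDeriv_lt_top Q μ]
    with y hy hf hg
  rcases le_or_gt (P.rnDeriv μ y).toReal c with h | h
  · simp [acceptance_of_le h]
  · have hgf : (Q.rnDeriv μ y).toReal ≤ (P.rnDeriv μ y).toReal :=
      calc (Q.rnDeriv μ y).toReal
          ≤ exp ε * (Q.rnDeriv μ y).toReal :=
            le_mul_of_one_le_left ENNReal.toReal_nonneg (one_le_exp hε)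
        _ ≤ (P.rnDeriv μ y).toReal := (hy h).trans h.le
    gcongr
    exact (ENNReal.toReal_le_toReal hg.ne hf.ne).1 hgf

end Densities

-- `E` is encoded by its acceptance probability `e`; for the mixture `μ = p P + (1 - p) Q`,
-- `P[X = 1 ∧ E(Y) = 1 ∣ Y = y] = p · (dP/dμ)(y) · e(y)`.
theorem bayesian_decomposition_general {Y : Type*} [MeasurableSpace Y]
    (P Q : Measure Y) [IsProbabilityMeasure P] [IsProbabilityMeasure Q]
    (ε δ : ℝ) (hε : 0 ≤ ε) (hδ : 0 ≤ δ) (p : ℝ) (hp0 : 0 ≤ p) (hp1 : p ≤ 1)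
    (hPQ : ∀ A : Set Y, MeasurableSet A → P A ≤ ENNReal.ofReal (exp ε) * Q A + ENNReal.ofReal δ) :
    ∃ e : Y → ℝ, Measurable e ∧ (∀ y, 0 ≤ e y ∧ e y ≤ 1) ∧
      (∀ᵐ y ∂(ENNReal.ofReal p • P + ENNReal.ofReal (1 - p) • Q),
        p * (P.rnDeriv (ENNReal.ofReal p • P + ENNReal.ofReal (1 - p) • Q) y).toReal * e y
          ≤ p / (p + (1 - p) * exp (-ε))) ∧
      (1 - δ ≤ ∫ y, e y ∂P) ∧ (1 - δ ≤ ∫ y, e y ∂Q) := by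
  obtain rfl | hp0 := hp0.eq_or_lt
  · exact ⟨fun _ => 1, measurable_const, fun _ => ⟨zero_le_one, le_rfl⟩, by simp,
      by simpa using hδ, by simpa using hδ⟩
  obtain rfl | hp1 := hp1.eq_or_lt
  · refine ⟨fun _ => 1, measurable_const, fun _ => ⟨zero_le_one, le_rfl⟩, ?_,
      by simpa using hδ, by simpa using hδ⟩
    have hμ : ENNReal.ofReal 1 • P + ENNReal.ofReal (1 - 1) • Q = P := by simp
    rw [hμ]
    filter_upwards [Measure.rnDeriv_self P] with y hy
    simp [hy]
  set μ := ENNReal.ofReal p • P + ENNReal.ofReal (1 - p) • Q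
  have := P.smul_finite (c := ENNReal.ofReal p) ENNReal.ofReal_ne_top
  have := Q.smul_finite (c := ENNReal.ofReal (1 - p)) ENNReal.ofReal_ne_top
  have hPμ : P ≪ μ :=
    (Measure.absolutelyContinuous_smul (ENNReal.ofReal_pos.2 hp0).ne').add_right _
  have hQμ : Q ≪ μ :=
    (Measure.absolutelyContinuous_smul (ENNReal.ofReal_pos.2 (sub_pos.2 hp1)).ne').add_right' _
  have hd : 0 < p + (1 - p) * exp (-ε) := by nlinarith [exp_pos (-ε)]
  set c := (p + (1 - p) * exp (-ε))⁻¹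
  have hc : 0 ≤ c := inv_nonneg.2 hd.le
  have hratio := ae_exp_mul_toReal_rnDeriv_le P Q hp0.le hp1 (inv_mul_cancel₀ hd.ne')
  have hrejP := lintegral_ofReal_one_sub_acceptance_le hPμ hQμ hc hratio hPQ
  have hrejQ := (lintegral_ofReal_one_sub_acceptance_le_lintegral hPμ hQμ hε hratio).trans hrejP
  set e : Y → ℝ := fun y => acceptance c (P.rnDeriv μ y).toReal
  have he : Measurable e := by fun_prop
  have he01 : ∀ y, e y ∈ Set.Icc 0 1 := fun y => acceptance_mem_Icc hc
  refine ⟨e, he, he01, ae_of_all _ fun y => ?_,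
    one_sub_le_integral_of_lintegral_le he he01 hδ hrejP,
    one_sub_le_integral_of_lintegral_le he he01 hδ hrejQ⟩
  rw [mul_assoc, div_eq_mul_inv]
  exact mul_le_mul_of_nonneg_left (mul_acceptance_le hc) hp0.le

/-- **Bayesian decomposition lemma.** If `P(A) ≤ eᵉ·Q(A) + δ` and `Q(A) ≤ eᵉ·P(A) + δ` for all
measurable `A`, then there is a randomized function `E : Y → {0,1}` — formalized by its
acceptance probability `e : Y → [0,1]` — such that:
(1) for `X ~ Bernoulli(p)` and `Y ~ P` if `X = 1`, `Y ~ Q` if `X = 0` (so the marginal of `Y` is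
the mixture `μ = p·P + (1-p)·Q`), the conditional probability
`P[X = 1 ∧ E(Y) = 1 ∣ Y = y] = p·(dP/dμ)(y)·e(y)` is at most `p/(p + (1-p)e⁻ᵉ)` for
(almost) every `y`; and
(2) `E[E(Y)] ≥ 1 - δ` under both `Y ~ P` and `Y ~ Q`. -/
theorem bayesian_decomposition {Y : Type*} [MeasurableSpace Y]
    (P Q : Measure Y) [IsProbabilityMeasure P] [IsProbabilityMeasure Q]
    (ε δ : ℝ) (hε : 0 ≤ ε) (hδ : 0 ≤ δ) (p : ℝ) (hp0 : 0 ≤ p) (hp1 : p ≤ 1)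
    (hPQ : ∀ A : Set Y, MeasurableSet A → P A ≤ ENNReal.ofReal (exp ε) * Q A + ENNReal.ofReal δ)
    (hQP : ∀ A : Set Y, MeasurableSet A → Q A ≤ ENNReal.ofReal (exp ε) * P A + ENNReal.ofReal δ) :
    ∃ e : Y → ℝ, Measurable e ∧ (∀ y, 0 ≤ e y ∧ e y ≤ 1) ∧
      (∀ᵐ y ∂(ENNReal.ofReal p • P + ENNReal.ofReal (1 - p) • Q),
        p * (P.rnDeriv (ENNReal.ofReal p • P + ENNReal.ofReal (1 - p) • Q) y).toReal * e y
          ≤ p / (p + (1 - p) * exp (-ε))) ∧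
      (1 - δ ≤ ∫ y, e y ∂P) ∧ (1 - δ ≤ ∫ y, e y ∂Q) :=
  bayesian_decomposition_general P Q ε δ hε hδ p hp0 hp1 hPQ
end

section
/- Let f : ℝ → [0,1] be nonincreasing and v, c ∈ ℝ with c ≥ 1. Then max over integers i ∈ [1,m] of (f(v−i)−f(v))/i is at most max{f(v−c), 1/c}. -/
/-- For a nonincreasing `f : ℝ → [0,1]` and any `c ≥ 1`,
`max_{i ∈ {1,…,m}} (f(v−i) − f(v))/i ≤ max{f(v−c), 1/c}`. -/
theorem sup_increment_le (f : ℝ → ℝ) (hmono : ∀ x y : ℝ, x ≤ y → f y ≤ f x)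
    (hrange : ∀ x, 0 ≤ f x ∧ f x ≤ 1) (m : ℕ) (hm : 1 ≤ m) (v c : ℝ) (hc : 1 ≤ c) :
    (Finset.Icc 1 m).sup' (by simp [Finset.nonempty_Icc]; omega)
        (fun i : ℕ => (f (v - i) - f v) / i)
      ≤ max (f (v - c)) (1 / c) := by
  apply Finset.sup'_le
  intro i hi
  simp only [Finset.mem_Icc] at hi
  have hi1 : (1:ℝ) ≤ (i:ℝ) := by exact_mod_cast hi.1
  have hipos : (0:ℝ) < (i:ℝ) := by linarith
  have hnum0 : 0 ≤ f (v - i) - f v := by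
    have := hmono (v - i) v (by linarith)
    linarith
  rcases le_total (i:ℝ) c with h | h
  · refine le_trans ?_ (le_max_left _ _)
    have h1 : f (v - i) ≤ f (v - c) := hmono (v - c) (v - i) (by linarith)
    have h2 : (f (v - i) - f v) / i ≤ f (v - i) - f v := div_le_self hnum0 hi1
    have := (hrange v).1
    linarith
  · refine le_trans ?_ (le_max_right _ _)
    have hcpos : (0:ℝ) < c := by linarith
    rw [div_le_div_iff₀ hipos hcpos]
    have h1 : f (v - i) ≤ 1 := (hrange (v - i)).2
    have h2 : 0 ≤ f v := (hrange v).1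
    nlinarith
end

section
/- The pathological algorithm that, on input s ∈ {-1,+1}^m, selects a uniformly random subset U ⊆ [m] of size r, sets T_i = 0 for i ∉ U, samples X ~ Bernoulli(β), and for i ∈ U independently sets T_i = s_i with probability (mδ)/(rβ) + (1−(mδ)/(rβ))·e^ε/(e^ε+1) if X=1, and with probability e^ε/(e^ε+1) if X=0 (otherwise T_i = −s_i), satisfies (ε,δ)-differential privacy with respect to flipping one input coordinate, provided 0 < mδ ≤ rβ. -/
open Real

/-- The ±1 sign (as an integer) of a boolean. -/
def isgn (b : Bool) : ℤ := if b then 1 else -1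

/-- Probability that a single guess equals `t` when the true value is `isgn s` and the guess is
correct with probability `q` (and wrong, i.e. the opposite sign, with probability `1-q`). -/
def guessPr (q : ℝ) (s : Bool) (t : ℤ) : ℝ :=
  if t = isgn s then q else if t = -isgn s then 1 - q else 0

/-- The output pmf of the pathological algorithm (Algorithm 5): pick a uniformly random
`U ⊆ [m]` with `|U| = r`, set `Tᵢ = 0` off `U`; with probability `β` each guess on `U` is
correct independently with probability `(mδ)/(rβ) + (1 − (mδ)/(rβ))·eᵉ/(eᵉ+1)`, and with
probability `1-β` each is correct independently with probability `eᵉ/(eᵉ+1)`. -/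
noncomputable def pathologicalPmf (m r : ℕ) (ε δ β : ℝ)
    (s : Fin m → Bool) (t : Fin m → ℤ) : ℝ :=
  (1 / (m.choose r : ℝ)) *
    ∑ U ∈ Finset.powersetCard r (Finset.univ : Finset (Fin m)),
      if ∀ i ∉ U, t i = 0 then
        β * ∏ i ∈ U, guessPr (m * δ / (r * β)
              + (1 - m * δ / (r * β)) * (exp ε / (exp ε + 1))) (s i) (t i)
          + (1 - β) * ∏ i ∈ U, guessPr (exp ε / (exp ε + 1)) (s i) (t i)
      else 0

/-!
For a fixed guessed set `U` the output is a product of coordinate laws. Flipping `s j` changes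
only the law at `j`. In the plain randomized-response branch its likelihood ratio is at most
`e^ε`. In the branch of probability `β` the guess is correct with probability
`Q = a + (1 - a) e^ε / (e^ε + 1)`, `a = mδ / (rβ)`, and `Q ≤ e^ε (1 - Q) + a`. So the output law
is bounded pointwise by `e^ε` times the neighbouring law plus a slack of total mass `βa` for each
`U ∋ j`. A fraction `r / m` of the sets `U` contain `j`, so the total slack is `(r / m) β a = δ`.
-/

open Finset

theorem prod_le_mul_prod_add_prod_update {ι κ : Type*} [Fintype ι] [DecidableEq ι]
    {f g : ι → κ → ℝ} {h : κ → ℝ} {E : ℝ} {j : ι}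
    (hfg : ∀ i ≠ j, f i = g i) (hf : ∀ i ≠ j, ∀ x, 0 ≤ f i x)
    (hj : ∀ x, f j x ≤ E * g j x + h x) (t : ι → κ) :
    ∏ i, f i (t i) ≤ E * ∏ i, g i (t i) + ∏ i, Function.update f j h i (t i) := by
  set R := ∏ i ∈ univ.erase j, f i (t i)
  have split : ∀ F : ι → κ → ℝ, (∀ i ≠ j, F i = f i) → ∏ i, F i (t i) = F j (t j) * R :=
    fun F hF => by
      rw [← mul_prod_erase univ (fun i => F i (t i)) (mem_univ j)]
      exact congrArg _ (prod_congr rfl fun i hi => by rw [hF i (ne_of_mem_erase hi)])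
  rw [split f fun _ _ => rfl, split g fun i hi => (hfg i hi).symm,
    split _ fun i hi => Function.update_of_ne hi _ _, Function.update_self]
  have hR : 0 ≤ R := prod_nonneg fun i hi => hf i (ne_of_mem_erase hi) _
  nlinarith [mul_le_mul_of_nonneg_right (hj (t j)) hR]

theorem tsum_indicator_le_of_le_add {α : Type*} {p q g : α → ℝ} {E δ : ℝ} (S : Finset α)
    (A : Set α) (hp : ∀ t ∉ S, p t = 0) (hq : ∀ t ∉ S, q t = 0)
    (hpq : ∀ t, p t ≤ E * q t + g t) (hg : ∀ t, 0 ≤ g t) (hgδ : ∑ t ∈ S, g t ≤ δ) :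
    ∑' t, A.indicator p t ≤ E * ∑' t, A.indicator q t + δ := by
  rw [tsum_eq_sum (s := S) fun t ht => by simp [hp t ht],
    tsum_eq_sum (s := S) fun t ht => by simp [hq t ht], mul_sum]
  calc ∑ t ∈ S, A.indicator p t ≤ ∑ t ∈ S, (E * A.indicator q t + A.indicator g t) :=
        sum_le_sum fun t _ => by by_cases ht : t ∈ A <;> simp [ht, hpq]
    _ ≤ ∑ t ∈ S, E * A.indicator q t + δ := by
        rw [sum_add_distrib]
        exact add_le_add_right ((sum_le_sum fun t _ =>
          Set.indicator_le_self' (fun t _ => hg t) t).trans hgδ) _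

theorem Finset.card_filter_mem_powersetCard_mul {α : Type*} [Fintype α] [DecidableEq α]
    (j : α) (r : ℕ) :
    #{U ∈ powersetCard r (univ : Finset α) | j ∈ U} * Fintype.card α =
      (Fintype.card α).choose r * r := by
  cases r with
  | zero => simp
  | succ k =>
    obtain ⟨n, hn⟩ : ∃ n, Fintype.card α = n + 1 :=
      ⟨Fintype.card α - 1, by have := Fintype.card_pos_iff.2 ⟨j⟩; omega⟩
    have h := card_filter_powersetCard_subset {j} univ (k + 1) (subset_univ _) (by simp)
    simp only [singleton_subset_iff, card_univ, hn, card_singleton, add_tsub_cancel_right] at h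
    rw [h, hn, mul_comm, Nat.add_one_mul_choose_eq]

theorem guessPr_nonneg {q : ℝ} (h0 : 0 ≤ q) (h1 : q ≤ 1) (s : Bool) (t : ℤ) :
    0 ≤ guessPr q s t := by
  unfold guessPr; split_ifs <;> linarith

theorem sum_guessPr (q : ℝ) (s : Bool) : ∑ x ∈ ({-1, 0, 1} : Finset ℤ), guessPr q s x = 1 := by
  cases s <;> norm_num [guessPr, isgn]

theorem guessPr_eq_zero {q : ℝ} {s : Bool} {t : ℤ} (h : t ∉ ({-1, 0, 1} : Finset ℤ)) :
    guessPr q s t = 0 := by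
  simp only [mem_insert, mem_singleton, not_or] at h
  cases s <;> simp [guessPr, isgn, h.1, h.2.2]

theorem div_mem_Icc_of_le {x y : ℝ} (hx : 0 ≤ x) (hxy : x ≤ y) : 0 ≤ x / y ∧ x / y ≤ 1 :=
  ⟨div_nonneg hx (hx.trans hxy), div_le_one_of_le₀ hxy (hx.trans hxy)⟩

/-- With probability `a` the guess is forced to be correct, otherwise it is `E`-randomized
response. -/
noncomputable def rrMix (E a : ℝ) : ℝ := a + (1 - a) * (E / (E + 1))

theorem rrMix_zero (E : ℝ) : rrMix E 0 = E / (E + 1) := by simp [rrMix]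

theorem rrMix_nonneg {E a : ℝ} (hE : 0 ≤ E) (ha0 : 0 ≤ a) (ha1 : a ≤ 1) : 0 ≤ rrMix E a := by
  unfold rrMix; have : 0 ≤ E / (E + 1) := by positivity
  nlinarith

theorem rrMix_le_one {E a : ℝ} (hE : 0 ≤ E) (ha1 : a ≤ 1) : rrMix E a ≤ 1 := by
  unfold rrMix; have : E / (E + 1) ≤ 1 := by rw [div_le_one (by linarith)]; linarith
  nlinarith

theorem guessPr_rrMix_le {E a : ℝ} (hE : 1 ≤ E) (ha0 : 0 ≤ a) (ha1 : a ≤ 1) (x y : Bool)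
    (u : ℤ) :
    guessPr (rrMix E a) x u ≤ E * guessPr (rrMix E a) y u + if u = isgn x then a else 0 := by
  have h0 := rrMix_nonneg (by linarith) ha0 ha1
  have h1 := rrMix_le_one (by linarith) ha1
  have hP : E * (1 - E / (E + 1)) = E / (E + 1) := by field_simp; ring
  have hP0 : 0 ≤ E / (E + 1) := by positivity
  have hcorrect : rrMix E a ≤ E * (1 - rrMix E a) + a := by unfold rrMix; nlinarith
  have hwrong : 1 - rrMix E a ≤ E * rrMix E a := by unfold rrMix; nlinarith
  cases x <;> cases y <;> simp only [guessPr, isgn] <;> norm_num <;> split_ifs <;>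
    first | linarith | nlinarith

/-- The law of one output coordinate when the guessed set is `U`: a guess on `U`, `0` off it. -/
def maskedRR {m : ℕ} (q : ℝ) (U : Finset (Fin m)) (s : Fin m → Bool) (i : Fin m) (x : ℤ) : ℝ :=
  if i ∈ U then guessPr q (s i) x else if x = 0 then 1 else 0

section MaskedRR

variable {m : ℕ} {q : ℝ} {U : Finset (Fin m)} {s : Fin m → Bool}

theorem prod_maskedRR (t : Fin m → ℤ) :
    ∏ i, maskedRR q U s i (t i) =
      if ∀ i ∉ U, t i = 0 then ∏ i ∈ U, guessPr q (s i) (t i) else 0 := by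
  have hU : ∏ i ∈ U, maskedRR q U s i (t i) = ∏ i ∈ U, guessPr q (s i) (t i) :=
    prod_congr rfl fun i hi => if_pos hi
  have hUc : ∏ i ∈ Uᶜ, maskedRR q U s i (t i) = if ∀ i ∉ U, t i = 0 then 1 else 0 := by
    rw [show ∏ i ∈ Uᶜ, maskedRR q U s i (t i) = ∏ i ∈ Uᶜ, if t i = 0 then (1 : ℝ) else 0 from
      prod_congr rfl fun i hi => if_neg (mem_compl.1 hi), prod_boole]
    simp only [mem_compl]
  rw [← prod_mul_prod_compl U, hU, hUc]
  split_ifs <;> simp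

theorem maskedRR_nonneg (h0 : 0 ≤ q) (h1 : q ≤ 1) (i : Fin m) (x : ℤ) :
    0 ≤ maskedRR q U s i x := by
  unfold maskedRR; split_ifs <;> first | exact guessPr_nonneg h0 h1 _ _ | norm_num

theorem sum_maskedRR (i : Fin m) : ∑ x ∈ ({-1, 0, 1} : Finset ℤ), maskedRR q U s i x = 1 := by
  unfold maskedRR; split_ifs
  · exact sum_guessPr q (s i)
  · simp

theorem maskedRR_eq_zero {x : ℤ} (hx : x ∉ ({-1, 0, 1} : Finset ℤ)) (i : Fin m) :
    maskedRR q U s i x = 0 := by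
  unfold maskedRR; split_ifs with h
  · exact guessPr_eq_zero hx
  · simp_all
  · rfl

end MaskedRR

theorem maskedRR_rrMix_le {m : ℕ} {E a : ℝ} (hE : 1 ≤ E) (ha0 : 0 ≤ a) (ha1 : a ≤ 1)
    {U : Finset (Fin m)} (s s' : Fin m → Bool) (j : Fin m) (x : ℤ) :
    maskedRR (rrMix E a) U s j x ≤
      E * maskedRR (rrMix E a) U s' j x + if j ∈ U ∧ x = isgn (s j) then a else 0 := by
  by_cases hj : j ∈ U
  · simpa [maskedRR, hj] using guessPr_rrMix_le hE ha0 ha1 (s j) (s' j) x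
  · simp only [maskedRR, hj, if_false, false_and, add_zero]
    split_ifs <;> linarith

/-- Conditional law of the output given the guessed set `U`. -/
noncomputable def subsetLaw {m : ℕ} (E a β : ℝ) (U : Finset (Fin m)) (s : Fin m → Bool)
    (t : Fin m → ℤ) : ℝ :=
  β * ∏ i, maskedRR (rrMix E a) U s i (t i) + (1 - β) * ∏ i, maskedRR (rrMix E 0) U s i (t i)

/-- The part of `subsetLaw E a β U s` not covered by `E`-privacy when coordinate `j` flips:
the forced-correct branch with a correct guess at `j`. -/
noncomputable def slackLaw {m : ℕ} (E a β : ℝ) (U : Finset (Fin m)) (s : Fin m → Bool)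
    (j : Fin m) (t : Fin m → ℤ) : ℝ :=
  β * ∏ i, Function.update (maskedRR (rrMix E a) U s) j
    (fun x => if j ∈ U ∧ x = isgn (s j) then a else 0) i (t i)

section SubsetLaw

variable {m : ℕ} {E a β : ℝ} (U : Finset (Fin m))

theorem subsetLaw_le (hE : 1 ≤ E) (ha0 : 0 ≤ a) (ha1 : a ≤ 1) (hβ0 : 0 ≤ β) (hβ1 : β ≤ 1)
    {s s' : Fin m → Bool} {j : Fin m} (hss' : ∀ i ≠ j, s i = s' i) (t : Fin m → ℤ) :
    subsetLaw E a β U s t ≤ E * subsetLaw E a β U s' t + slackLaw E a β U s j t := by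
  have agree : ∀ b, ∀ i ≠ j, maskedRR (rrMix E b) U s i = maskedRR (rrMix E b) U s' i :=
    fun b i hi => by unfold maskedRR; rw [hss' i hi]
  have nonneg : ∀ b, 0 ≤ b → b ≤ 1 → ∀ i ≠ j, ∀ x, 0 ≤ maskedRR (rrMix E b) U s i x :=
    fun b hb0 hb1 i _ => maskedRR_nonneg (rrMix_nonneg (by linarith) hb0 hb1)
      (rrMix_le_one (by linarith) hb1) i
  have hmix := prod_le_mul_prod_add_prod_update (agree a) (nonneg a ha0 ha1)
    (maskedRR_rrMix_le hE ha0 ha1 s s' j) t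
  have hrr := prod_le_mul_prod_add_prod_update (h := fun _ => 0) (agree 0)
    (nonneg 0 le_rfl zero_le_one)
    (fun x => by simpa using maskedRR_rrMix_le hE le_rfl zero_le_one s s' j x) t
  have hrr_slack : ∏ i, Function.update (maskedRR (rrMix E 0) U s) j (fun _ => 0) i (t i) = 0 :=
    prod_eq_zero (mem_univ j) (by simp)
  rw [hrr_slack, add_zero] at hrr
  unfold subsetLaw slackLaw
  nlinarith [mul_le_mul_of_nonneg_left hmix hβ0, mul_le_mul_of_nonneg_left hrr (sub_nonneg.2 hβ1)]

theorem slackLaw_nonneg (hE : 0 ≤ E) (ha0 : 0 ≤ a) (ha1 : a ≤ 1) (hβ0 : 0 ≤ β)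
    (s : Fin m → Bool) (j : Fin m) (t : Fin m → ℤ) : 0 ≤ slackLaw E a β U s j t := by
  refine mul_nonneg hβ0 (prod_nonneg fun i _ => ?_)
  rcases eq_or_ne i j with rfl | hij
  · simp only [Function.update_self]; split_ifs <;> simp [ha0]
  · rw [Function.update_of_ne hij]
    exact maskedRR_nonneg (rrMix_nonneg hE ha0 ha1) (rrMix_le_one hE ha1) i _

theorem sum_slackLaw (s : Fin m → Bool) (j : Fin m) :
    ∑ t ∈ Fintype.piFinset fun _ => ({-1, 0, 1} : Finset ℤ), slackLaw E a β U s j t =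
      if j ∈ U then β * a else 0 := by
  unfold slackLaw
  rw [← mul_sum, sum_prod_piFinset, prod_eq_single_of_mem j (mem_univ j)]
  · by_cases hjU : j ∈ U <;> cases s j <;> simp [hjU, isgn]
  · intro i _ hij
    rw [Function.update_of_ne hij]
    exact sum_maskedRR i

theorem subsetLaw_eq_zero (s : Fin m → Bool) {t : Fin m → ℤ}
    (ht : t ∉ Fintype.piFinset fun _ => ({-1, 0, 1} : Finset ℤ)) : subsetLaw E a β U s t = 0 := by
  obtain ⟨i, hi⟩ := not_forall.1 (mt Fintype.mem_piFinset.2 ht)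
  have hzero : ∀ q, ∏ k, maskedRR q U s k (t k) = 0 :=
    fun q => prod_eq_zero (mem_univ i) (maskedRR_eq_zero hi i)
  simp [subsetLaw, hzero]

end SubsetLaw

theorem pathologicalPmf_eq (m r : ℕ) (ε δ β : ℝ) (s : Fin m → Bool) (t : Fin m → ℤ) :
    pathologicalPmf m r ε δ β s t = (1 / (m.choose r : ℝ)) *
      ∑ U ∈ powersetCard r univ, subsetLaw (exp ε) (m * δ / (r * β)) β U s t := by
  simp only [pathologicalPmf, subsetLaw, prod_maskedRR, rrMix_zero]
  congr 1
  refine sum_congr rfl fun U _ => ?_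
  split_ifs <;> simp [rrMix]

theorem pathologicalPmf_eq_zero {m r : ℕ} {ε δ β : ℝ} (s : Fin m → Bool) {t : Fin m → ℤ}
    (ht : t ∉ Fintype.piFinset fun _ => ({-1, 0, 1} : Finset ℤ)) :
    pathologicalPmf m r ε δ β s t = 0 := by
  simp [pathologicalPmf_eq, subsetLaw_eq_zero _ s ht]

noncomputable def pathologicalSlack (m r : ℕ) (ε δ β : ℝ) (s : Fin m → Bool) (j : Fin m)
    (t : Fin m → ℤ) : ℝ :=
  (1 / (m.choose r : ℝ)) *
    ∑ U ∈ powersetCard r univ, slackLaw (exp ε) (m * δ / (r * β)) β U s j t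

section Pathological

variable {m r : ℕ} {ε δ β : ℝ}

theorem pathologicalPmf_le (hε : 0 ≤ ε) (hβ0 : 0 ≤ β) (hβ1 : β ≤ 1) (hδ : 0 ≤ m * δ)
    (hδβ : m * δ ≤ r * β) {s s' : Fin m → Bool} {j : Fin m} (hss' : ∀ i ≠ j, s i = s' i)
    (t : Fin m → ℤ) :
    pathologicalPmf m r ε δ β s t ≤
      exp ε * pathologicalPmf m r ε δ β s' t + pathologicalSlack m r ε δ β s j t := by
  obtain ⟨ha0, ha1⟩ := div_mem_Icc_of_le hδ hδβ
  rw [pathologicalPmf_eq, pathologicalPmf_eq, pathologicalSlack]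
  calc _ ≤ (1 / (m.choose r : ℝ)) * ∑ U ∈ powersetCard r univ,
        (exp ε * subsetLaw (exp ε) (m * δ / (r * β)) β U s' t +
          slackLaw (exp ε) (m * δ / (r * β)) β U s j t) := by
        gcongr with U
        exact subsetLaw_le U (one_le_exp hε) ha0 ha1 hβ0 hβ1 hss' t
    _ = _ := by rw [sum_add_distrib, ← mul_sum]; ring

theorem pathologicalSlack_nonneg (hβ0 : 0 ≤ β) (hδ : 0 ≤ m * δ) (hδβ : m * δ ≤ r * β)
    (s : Fin m → Bool) (j : Fin m) (t : Fin m → ℤ) : 0 ≤ pathologicalSlack m r ε δ β s j t := by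
  obtain ⟨ha0, ha1⟩ := div_mem_Icc_of_le hδ hδβ
  exact mul_nonneg (by positivity)
    (sum_nonneg fun U _ => slackLaw_nonneg U (exp_pos ε).le ha0 ha1 hβ0 s j t)

theorem sum_pathologicalSlack (hrm : r ≤ m) (hδpos : 0 < m * δ) (hδβ : m * δ ≤ r * β)
    (s : Fin m → Bool) (j : Fin m) :
    ∑ t ∈ Fintype.piFinset fun _ => ({-1, 0, 1} : Finset ℤ), pathologicalSlack m r ε δ β s j t
      = δ := by
  have hC : (m.choose r : ℝ) ≠ 0 := by exact_mod_cast (Nat.choose_pos hrm).ne'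
  have hm : (m : ℝ) ≠ 0 := by rintro hm; simp [hm] at hδpos
  obtain ⟨hr, hβ⟩ := mul_ne_zero_iff.1 (hδpos.trans_le hδβ).ne'
  have hcount : (#{U ∈ powersetCard r univ | j ∈ U} : ℝ) * m = m.choose r * r := by
    simpa using congrArg (Nat.cast (R := ℝ)) (card_filter_mem_powersetCard_mul j r)
  simp only [pathologicalSlack, ← mul_sum]
  rw [sum_comm, sum_congr rfl fun U _ => sum_slackLaw U s j, ← sum_filter, sum_const,
    nsmul_eq_mul]
  field_simp
  linear_combination δ * hcount

end Pathological

theorem pathological_algorithm_dp_general (m r : ℕ) (hrm : r ≤ m)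
    (ε δ β : ℝ) (hε : 0 ≤ ε) (hβ0 : 0 < β) (hβ1 : β ≤ 1)
    (hδpos : 0 < m * δ) (hδβ : m * δ ≤ r * β) :
    ∀ s s' : Fin m → Bool, Adjacent s s' → ∀ A : Set (Fin m → ℤ),
      ∑' t : Fin m → ℤ, A.indicator (pathologicalPmf m r ε δ β s) t
        ≤ exp ε * ∑' t : Fin m → ℤ, A.indicator (pathologicalPmf m r ε δ β s') t + δ := by
  rintro s s' ⟨j, hss'⟩ A
  exact tsum_indicator_le_of_le_add _ A (fun _ => pathologicalPmf_eq_zero s)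
    (fun _ => pathologicalPmf_eq_zero s')
    (pathologicalPmf_le hε hβ0.le hβ1 hδpos.le hδβ hss')
    (pathologicalSlack_nonneg hβ0.le hδpos.le hδβ s j)
    (sum_pathologicalSlack hrm hδpos hδβ s j).le

/-- **The pathological algorithm is `(ε,δ)`-DP** with respect to flipping one input
coordinate, provided `0 < mδ ≤ rβ`. -/
theorem pathological_algorithm_dp (m r : ℕ) (hm : 1 ≤ m) (hr1 : 1 ≤ r) (hrm : r ≤ m)
    (ε δ β : ℝ) (hε : 0 ≤ ε) (hδ : 0 ≤ δ) (hβ0 : 0 < β) (hβ1 : β ≤ 1)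
    (hδpos : 0 < m * δ) (hδβ : m * δ ≤ r * β) :
    ∀ s s' : Fin m → Bool, Adjacent s s' → ∀ A : Set (Fin m → ℤ),
      ∑' t : Fin m → ℤ, A.indicator (pathologicalPmf m r ε δ β s) t
        ≤ exp ε * ∑' t : Fin m → ℤ, A.indicator (pathologicalPmf m r ε δ β s') t + δ :=
  pathological_algorithm_dp_general m r hrm ε δ β hε hβ0 hβ1 hδpos hδβ
end
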